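/- arXiv:1403.2649 — 5 statements merged into one kernel-verified Lean document; each statement's English description precedes it below -/
import Mathlib

section
/- Let Ω = Δ(A,B,C) be a nondegenerate triangle in ℝ² and let P be the single-point list consisting of f_Ω(0), the centroid of Ω. Then D_1^P(P;Ω) = 7/9. -/
open MeasureTheory Filter Real

noncomputable section

/-- Points of the plane. -/
abbrev Pt := ℝ × ℝ

/-- The (closed) triangle with vertices `A`, `B`, `C`: their convex hull. -/
def triangle (A B C : Pt) : Set Pt := convexHull ℝ {A, B, C}

/-- The triangle `Δ(A,B,C)` is nondegenerate iff `A`, `B`, `C` are not collinear. -/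
def Nondeg (A B C : Pt) : Prop := ¬ Collinear ℝ ({A, B, C} : Set Pt)

/-- Two-dimensional Lebesgue volume, as a real number. -/
def vol (S : Set Pt) : ℝ := (volume S).toReal

/-- Signed discrepancy `δ_N(S; P, Ω)` of the list of points `P` at the set `S`,
relative to the domain `Ω`. -/
def sdisc {N : ℕ} (S : Set Pt) (P : Fin N → Pt) (Ω : Set Pt) : ℝ :=
  vol (S ∩ Ω) / vol Ω - (Nat.card {i : Fin N // P i ∈ S} : ℝ) / N

/-- Discrepancy `D_N(𝒮; P, Ω)`: supremum of the absolute signed discrepancy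
over a class `𝒮` of sets. -/
def Disc {N : ℕ} (𝒮 : Set (Set Pt)) (P : Fin N → Pt) (Ω : Set Pt) : ℝ :=
  ⨆ S ∈ 𝒮, |sdisc S P Ω|

/-- The half-open parallelogram `𝒯_{a,b,C}` anchored at `C` with sides
`a(A-C)` and `b(B-C)`. -/
def parlg (A B C : Pt) (a b : ℝ) : Set Pt :=
  {x | ∃ s t : ℝ, 0 ≤ s ∧ s < a ∧ 0 ≤ t ∧ t < b ∧ x = C + s • (A - C) + t • (B - C)}

/-- The family `𝒮_C` of parallelograms anchored at `C`, intersected with the triangle. -/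
def anchoredFam (A B C : Pt) : Set (Set Pt) :=
  {S | ∃ a b : ℝ, 0 < a ∧ a ≤ 1 ∧ 0 < b ∧ b ≤ 1 ∧ S = parlg A B C a b ∩ triangle A B C}

/-- The class `𝒮_A ∪ 𝒮_B ∪ 𝒮_C` of anchored parallelograms of the triangle `Δ(A,B,C)`. -/
def parFam (A B C : Pt) : Set (Set Pt) :=
  anchoredFam B C A ∪ anchoredFam A C B ∪ anchoredFam A B C

/-- The parallelogram discrepancy `D_N^P(P; Δ(A,B,C))`. -/
def parDisc {N : ℕ} (P : Fin N → Pt) (A B C : Pt) : ℝ :=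
  Disc (parFam A B C) P (triangle A B C)

/-- Midpoint of two points. -/
def mid (P Q : Pt) : Pt := (2⁻¹ : ℝ) • (P + Q)

/-- A triangle recorded as the (ordered) triple of its vertices. -/
abbrev Tri2 := Pt × Pt × Pt

/-- The centroid of a triangle: the average of its three vertices. -/
def ctr (T : Tri2) : Pt := (3⁻¹ : ℝ) • (T.1 + T.2.1 + T.2.2)

/-- The point set of a triangle given by its vertices. -/
def triSet (T : Tri2) : Set Pt := triangle T.1 T.2.1 T.2.2

/-- The four-way subdivision of a triangle: subtriangle number `d ∈ {0,1,2,3}`. -/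
def subdiv (T : Tri2) (d : ℕ) : Tri2 :=
  let A := T.1; let B := T.2.1; let C := T.2.2
  if d = 0 then (mid B C, mid A C, mid A B)
  else if d = 1 then (A, mid A B, mid A C)
  else if d = 2 then (mid A B, B, mid B C)
  else (mid A C, mid B C, C)

/-- The triangular van der Corput point `f_T(i)`: digits of `i` in base `4` select a
nested subtriangle, and `f_T(i)` is its centroid. -/
def vdc (T : Tri2) (i : ℕ) : Pt :=
  if h : i = 0 then ctr T else vdc (subdiv T (i % 4)) (i / 4)
termination_by i
decreasing_by exact Nat.div_lt_self (Nat.pos_of_ne_zero h) (by norm_num)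

/-- The `i`-th subtriangle (for `i < 4^k`) of the standard level-`k` subdivision of `T`,
indexed by the base-4 digits of `i`. -/
def subdivAt (T : Tri2) : ℕ → ℕ → Tri2
  | 0, _ => T
  | (k+1), i => subdiv (subdivAt T k (i / 4)) (i % 4)

/-- The standard level-`k` subdivision of a triangle: the set of the `4^k` congruent
subtriangles obtained by `k` recursive four-way subdivisions. -/
def level (T : Tri2) : ℕ → Set Tri2
  | 0 => {T}
  | (k+1) => {S | ∃ S' ∈ level T k, ∃ d < 4, S = subdiv S' d}

/-- Riemann integrability (in the triangular-subdivision sense) of `f` on the closed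
triangle `T`, with integral mean `μ`: every sequence of tagged Riemann sums over the
level-`k` subdivisions converges to `μ`. -/
def RiemannMean (T : Tri2) (f : Pt → ℝ) (μ : ℝ) : Prop :=
  ∀ x : ℕ → ℕ → Pt, (∀ k i, i < 4^k → x k i ∈ triSet (subdivAt T k i)) →
    Tendsto (fun k => (4^k : ℝ)⁻¹ * ∑ i ∈ Finset.range (4^k), f (x k i)) atTop (nhds μ)

/-- A real number is a quadratic irrational if it has the form `(a + b√c)/d` with
integers `a,b,c,d`, `b ≠ 0`, `d ≠ 0`, `c > 0` and `c` not a perfect square. -/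
def QuadIrr (θ : ℝ) : Prop :=
  ∃ a b c d : ℤ, b ≠ 0 ∧ d ≠ 0 ∧ 0 < c ∧ (∀ m : ℤ, c ≠ m ^ 2) ∧
    θ = ((a : ℝ) + (b : ℝ) * Real.sqrt (c : ℝ)) / (d : ℝ)

/-- Distance from a real number to the nearest integer. -/
def distToInt (x : ℝ) : ℝ := |x - round x|

/-- A real number `θ` is badly approximable if `n‖nθ‖ > c` for all positive `n`,
for some constant `c > 0`. -/
def BadlyApprox (θ : ℝ) : Prop :=
  ∃ c : ℝ, 0 < c ∧ ∀ n : ℕ, 0 < n → c < (n : ℝ) * distToInt ((n : ℝ) * θ)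

end

/-!
In the affine coordinates `(s, t) ↦ C + s (A - C) + t (B - C)` the triangle `Δ(A,B,C)` becomes
the standard triangle `T = {s, t ≥ 0, s + t ≤ 1}` of area `1/2`, the parallelogram anchored at
`C` becomes `[0,a) × [0,b) ∩ T`, and the centroid becomes `(1/3, 1/3)`; ratios of areas are
unchanged. Hence the signed discrepancy is `2 vol([0,a) × [0,b) ∩ T) - 𝟙[1/3 < a ∧ 1/3 < b]`.
When the centroid is counted the area lies between `1/9` and `1/2`, otherwise it is at most
`ab ≤ 1/3`, so `|δ| ≤ 7/9`; the squares with `a = b ↓ 1/3` have `|δ| ≥ 1 - 2a² → 7/9`.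
The other two anchors reduce to `C` by relabelling the vertices.
-/
open MeasureTheory Set Filter Topology

section AffineImage

variable {E : Type*} [NormedAddCommGroup E] [NormedSpace ℝ E] [MeasurableSpace E] [BorelSpace E]
  [FiniteDimensional ℝ E] (μ : Measure E) [μ.IsAddHaarMeasure]

theorem addHaar_image_affineMap (f : E →ᵃ[ℝ] E) (s : Set E) :
    μ (f '' s) = ENNReal.ofReal |LinearMap.det f.linear| * μ s := by
  have hf : (f : E → E) = (· + f 0) ∘ f.linear := by
    ext x; rw [f.decomp]; simp
  rw [hf, image_comp, image_add_right, measure_preimage_add_right,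
    Measure.addHaar_image_linearMap]

theorem toReal_addHaar_image_div_of_injective {f : E →ᵃ[ℝ] E} (hf : Function.Injective f)
    (s t : Set E) :
    (μ (f '' s)).toReal / (μ (f '' t)).toReal = (μ s).toReal / (μ t).toReal := by
  have hlin : Function.Injective f.linear := (f.linear_injective_iff).2 hf
  have hdet : LinearMap.det f.linear ≠ 0 :=
    ((LinearMap.isUnit_iff_isUnit_det _).1 ((Module.End.isUnit_iff _).2
      ⟨hlin, LinearMap.injective_iff_surjective.1 hlin⟩)).ne_zero
  simp only [addHaar_image_affineMap, ENNReal.toReal_mul, ENNReal.toReal_ofReal (abs_nonneg _)]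
  exact mul_div_mul_left _ _ (abs_ne_zero.2 hdet)

end AffineImage

theorem collinear_of_smul_vsub_add_smul_vsub_eq_zero {k V P : Type*} [Field k] [AddCommGroup V]
    [Module k V] [AddTorsor V P] {A B C : P} {s t : k} (hst : s ≠ 0 ∨ t ≠ 0)
    (h : s • (A -ᵥ C) + t • (B -ᵥ C) = 0) : Collinear k ({A, B, C} : Set P) := by
  wlog hs : s ≠ 0 generalizing A B s t
  · rw [insert_comm]
    exact this hst.symm (by rwa [add_comm]) (hst.resolve_left hs)
  rw [collinear_iff_of_mem (mem_insert_of_mem _ (mem_insert_of_mem _ (mem_singleton C)))]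
  refine ⟨B -ᵥ C, ?_⟩
  have hA : A -ᵥ C = (-t / s) • (B -ᵥ C) := by
    calc A -ᵥ C = s⁻¹ • (s • (A -ᵥ C)) := (inv_smul_smul₀ hs _).symm
      _ = (-t / s) • (B -ᵥ C) := by rw [eq_neg_of_add_eq_zero_left h]; module
  rintro p (rfl | rfl | rfl)
  · exact ⟨-t / s, by rw [← hA, vsub_vadd]⟩
  · exact ⟨1, by rw [one_smul, vsub_vadd]⟩
  · exact ⟨0, by rw [zero_smul, zero_vadd]⟩

theorem Real.biSup_eq_of_forall_le_of_forall_lt_exists_gt {ι : Type*} {s : Set ι} {f : ι → ℝ}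
    {c : ℝ} (hc : 0 ≤ c) (hle : ∀ i ∈ s, f i ≤ c) (hlt : ∀ w < c, ∃ i ∈ s, w < f i) :
    ⨆ i ∈ s, f i = c := by
  have : Nonempty ι := let ⟨i, _⟩ := hlt (c - 1) (by linarith); ⟨i⟩
  refine ciSup_eq_of_forall_le_of_forall_lt_exists_gt
    (fun i => Real.iSup_le (fun hi => hle i hi) hc) fun w hw => ?_
  obtain ⟨i, hi, hwi⟩ := hlt w hw
  exact ⟨i, by rwa [ciSup_pos hi]⟩

def stdTriangle : Set Pt := {p | 0 ≤ p.1 ∧ 0 ≤ p.2 ∧ p.1 + p.2 ≤ 1}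

theorem measurableSet_stdTriangle : MeasurableSet stdTriangle :=
  (measurableSet_le measurable_const measurable_fst).inter
    ((measurableSet_le measurable_const measurable_snd).inter
      (measurableSet_le (measurable_fst.add measurable_snd) measurable_const))

theorem volume_stdTriangle : volume stdTriangle = ENNReal.ofReal 2⁻¹ := by
  have hslice : ∀ x : ℝ, volume (Prod.mk x ⁻¹' stdTriangle)
      = (Icc 0 1).indicator (fun x => ENNReal.ofReal (1 - x)) x := by
    intro x
    by_cases hx : x ∈ Icc (0 : ℝ) 1
    · have : Prod.mk x ⁻¹' stdTriangle = Icc 0 (1 - x) := by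
        ext y; simp only [stdTriangle, mem_preimage, mem_ofPred_eq, mem_Icc]
        constructor
        · rintro ⟨-, h2, h3⟩; exact ⟨h2, by linarith⟩
        · rintro ⟨h2, h3⟩; exact ⟨hx.1, h2, by linarith⟩
      rw [this, Real.volume_Icc, indicator_of_mem hx, sub_zero]
    · have : Prod.mk x ⁻¹' stdTriangle = ∅ := by
        ext y; simp only [stdTriangle, mem_preimage, mem_ofPred_eq, mem_empty_iff_false, iff_false]
        rintro ⟨h1, h2, h3⟩; exact hx ⟨h1, by linarith⟩
      rw [this, measure_empty, indicator_of_notMem hx]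
  have hint : ∫ x in Icc (0 : ℝ) 1, (1 - x) = 2⁻¹ := by
    rw [integral_Icc_eq_integral_Ioc, ← intervalIntegral.integral_of_le zero_le_one,
      intervalIntegral.integral_sub intervalIntegrable_const intervalIntegral.intervalIntegrable_id]
    norm_num
  rw [Measure.volume_eq_prod, Measure.prod_apply measurableSet_stdTriangle]
  simp only [hslice]
  rw [lintegral_indicator measurableSet_Icc, ← hint, ofReal_integral_eq_lintegral_ofReal]
  · exact (continuous_const.sub continuous_id).integrableOn_Icc
  · filter_upwards [ae_restrict_mem measurableSet_Icc] with x hx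
    simp only [Pi.zero_apply, sub_nonneg, hx.2]

theorem convex_stdTriangle : Convex ℝ stdTriangle := by
  have h1 : Convex ℝ {p : Pt | 0 ≤ p.1} := convex_halfSpace_ge (LinearMap.fst ℝ ℝ ℝ).isLinear 0
  have h2 : Convex ℝ {p : Pt | 0 ≤ p.2} := convex_halfSpace_ge (LinearMap.snd ℝ ℝ ℝ).isLinear 0
  have h3 : Convex ℝ {p : Pt | p.1 + p.2 ≤ 1} :=
    convex_halfSpace_le (LinearMap.fst ℝ ℝ ℝ + LinearMap.snd ℝ ℝ ℝ).isLinear 1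
  exact h1.inter (h2.inter h3)

theorem convexHull_stdTriangle :
    convexHull ℝ {((1 : ℝ), (0 : ℝ)), (0, 1), 0} = stdTriangle := by
  refine subset_antisymm (convexHull_min ?_ convex_stdTriangle) fun p ⟨h1, h2, h3⟩ => ?_
  · rintro p (rfl | rfl | rfl) <;> norm_num [stdTriangle]
  have hp : p = ∑ i, ![p.1, p.2, 1 - p.1 - p.2] i • ![((1 : ℝ), (0 : ℝ)), (0, 1), 0] i := by
    simp [Fin.sum_univ_three]
  rw [hp]
  refine (convex_convexHull ℝ _).sum_mem ?_ ?_ ?_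
  · intro i _; fin_cases i <;> simp <;> linarith
  · simp [Fin.sum_univ_three]
  · intro i _; apply subset_convexHull; fin_cases i <;> simp

def triCoord (A B C : Pt) : Pt →ᵃ[ℝ] Pt :=
  ((LinearMap.toSpanSingleton ℝ Pt (A - C)).coprod
    (LinearMap.toSpanSingleton ℝ Pt (B - C))).toAffineMap + AffineMap.const ℝ Pt C

@[simp]
theorem triCoord_apply (A B C p : Pt) :
    triCoord A B C p = C + p.1 • (A - C) + p.2 • (B - C) := by
  simp [triCoord]; abel

theorem triCoord_injective {A B C : Pt} (h : Nondeg A B C) :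
    Function.Injective (triCoord A B C) := by
  intro p q hpq
  simp only [triCoord_apply] at hpq
  have hcomb : (p.1 - q.1) • (A -ᵥ C) + (p.2 - q.2) • (B -ᵥ C) = 0 := by
    simp only [vsub_eq_sub]; linear_combination (norm := module) hpq
  by_contra hne
  refine h (collinear_of_smul_vsub_add_smul_vsub_eq_zero (not_and_or.1 fun ⟨h1, h2⟩ => ?_) hcomb)
  exact hne (Prod.ext (sub_eq_zero.1 h1) (sub_eq_zero.1 h2))

theorem image_triCoord_stdTriangle (A B C : Pt) :
    triCoord A B C '' stdTriangle = triangle A B C := by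
  rw [← convexHull_stdTriangle, AffineMap.image_convexHull, triangle]
  simp [image_insert_eq]

theorem image_triCoord_Ico_prod_Ico (A B C : Pt) (a b : ℝ) :
    triCoord A B C '' (Ico 0 a ×ˢ Ico 0 b) = parlg A B C a b := by
  ext x
  simp only [parlg, mem_image, mem_prod, mem_Ico, Prod.exists, triCoord_apply, mem_ofPred_eq]
  constructor
  · rintro ⟨s, t, ⟨⟨hs0, hs⟩, ht0, ht⟩, rfl⟩; exact ⟨s, t, hs0, hs, ht0, ht, rfl⟩
  · rintro ⟨s, t, hs0, hs, ht0, ht, rfl⟩; exact ⟨s, t, ⟨⟨hs0, hs⟩, ht0, ht⟩, rfl⟩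

theorem triCoord_third (A B C : Pt) : triCoord A B C (3⁻¹, 3⁻¹) = ctr (A, B, C) := by
  rw [triCoord_apply, ctr]; module

theorem sdisc_fin_one (S Ω : Set Pt) (P : Fin 1 → Pt) :
    sdisc S P Ω = vol (S ∩ Ω) / vol Ω - S.indicator 1 (P 0) := by
  have hcard : (Nat.card {i : Fin 1 // P i ∈ S} : ℝ) = S.indicator 1 (P 0) := by
    by_cases h0 : P 0 ∈ S
    · simp [h0]
    · have : IsEmpty {i : Fin 1 // P i ∈ S} := ⟨fun i => h0 (Subsingleton.elim i.1 0 ▸ i.2)⟩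
      simp [h0]
  rw [sdisc, hcard, Nat.cast_one, div_one]

theorem volume_Ico_prod_Ico_inter_stdTriangle_ne_top (a b : ℝ) :
    volume (Ico 0 a ×ˢ Ico 0 b ∩ stdTriangle) ≠ ⊤ :=
  ((measure_mono inter_subset_right).trans_lt
    (by rw [volume_stdTriangle]; exact ENNReal.ofReal_lt_top)).ne

theorem volume_real_Ico_prod_Ico_inter_stdTriangle_le_mul {a b : ℝ} (ha : 0 ≤ a) (hb : 0 ≤ b) :
    volume.real (Ico 0 a ×ˢ Ico 0 b ∩ stdTriangle) ≤ a * b := by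
  calc volume.real (Ico 0 a ×ˢ Ico 0 b ∩ stdTriangle) ≤ volume.real (Ico 0 a ×ˢ Ico 0 b) :=
        measureReal_mono inter_subset_left (by simp [Measure.volume_eq_prod, ENNReal.mul_eq_top])
    _ = a * b := by
        rw [Measure.volume_eq_prod, measureReal_prod_prod, Real.volume_real_Ico_of_le ha,
          Real.volume_real_Ico_of_le hb, sub_zero, sub_zero]

theorem volume_real_Ico_prod_Ico_inter_stdTriangle_le_half (a b : ℝ) :
    volume.real (Ico 0 a ×ˢ Ico 0 b ∩ stdTriangle) ≤ 2⁻¹ := by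
  calc volume.real (Ico 0 a ×ˢ Ico 0 b ∩ stdTriangle) ≤ volume.real stdTriangle :=
        measureReal_mono inter_subset_right (by simp [volume_stdTriangle])
    _ = 2⁻¹ := by rw [measureReal_def, volume_stdTriangle, ENNReal.toReal_ofReal (by norm_num)]

theorem ninth_le_volume_real_Ico_prod_Ico_inter_stdTriangle {a b : ℝ} (ha : 3⁻¹ ≤ a)
    (hb : 3⁻¹ ≤ b) : 9⁻¹ ≤ volume.real (Ico 0 a ×ˢ Ico 0 b ∩ stdTriangle) := by
  have hsq : Ico 0 3⁻¹ ×ˢ Ico 0 3⁻¹ ⊆ Ico 0 a ×ˢ Ico 0 b ∩ stdTriangle := by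
    rintro p ⟨⟨h1, h2⟩, h3, h4⟩
    exact ⟨⟨⟨h1, h2.trans_le ha⟩, h3, h4.trans_le hb⟩, h1, h3, by linarith⟩
  calc (9⁻¹ : ℝ) = volume.real (Ico (0 : ℝ) 3⁻¹ ×ˢ Ico (0 : ℝ) 3⁻¹) := by
        rw [Measure.volume_eq_prod, measureReal_prod_prod, Real.volume_real_Ico_of_le (by norm_num)]
        norm_num
    _ ≤ _ := measureReal_mono hsq (volume_Ico_prod_Ico_inter_stdTriangle_ne_top a b)

theorem abs_two_mul_volume_real_sub_indicator_le {a b : ℝ} (ha : 0 ≤ a) (ha1 : a ≤ 1) (hb : 0 ≤ b)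
    (hb1 : b ≤ 1) :
    |2 * volume.real (Ico 0 a ×ˢ Ico 0 b ∩ stdTriangle)
      - (Ico 0 a ×ˢ Ico 0 b ∩ stdTriangle).indicator 1 (3⁻¹, 3⁻¹)| ≤ 7 / 9 := by
  have hm0 := measureReal_nonneg (μ := volume) (s := Ico 0 a ×ˢ Ico 0 b ∩ stdTriangle)
  have hmab := volume_real_Ico_prod_Ico_inter_stdTriangle_le_mul ha hb
  by_cases hc : ((3⁻¹ : ℝ), (3⁻¹ : ℝ)) ∈ Ico 0 a ×ˢ Ico 0 b ∩ stdTriangle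
  · have h9 := ninth_le_volume_real_Ico_prod_Ico_inter_stdTriangle hc.1.1.2.le hc.1.2.2.le
    have h2 := volume_real_Ico_prod_Ico_inter_stdTriangle_le_half a b
    rw [indicator_of_mem hc, Pi.one_apply, abs_le]
    constructor <;> linarith
  · have hab : a ≤ 3⁻¹ ∨ b ≤ 3⁻¹ := by
      by_contra! h
      exact hc ⟨⟨⟨by norm_num, h.1⟩, by norm_num, h.2⟩, by norm_num [stdTriangle]⟩
    have h3 : a * b ≤ 3⁻¹ := by
      rcases hab with h | h <;> nlinarith
    rw [indicator_of_notMem hc, sub_zero, abs_le]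
    constructor <;> linarith

theorem one_sub_two_mul_sq_le_abs_two_mul_volume_real_sub_indicator {a : ℝ} (ha : 3⁻¹ < a) :
    1 - 2 * a ^ 2 ≤ |2 * volume.real (Ico 0 a ×ˢ Ico 0 a ∩ stdTriangle)
      - (Ico 0 a ×ˢ Ico 0 a ∩ stdTriangle).indicator 1 (3⁻¹, 3⁻¹)| := by
  have hc : ((3⁻¹ : ℝ), (3⁻¹ : ℝ)) ∈ Ico 0 a ×ˢ Ico 0 a ∩ stdTriangle :=
    ⟨⟨⟨by norm_num, ha⟩, by norm_num, ha⟩, by norm_num [stdTriangle]⟩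
  have hmaa := volume_real_Ico_prod_Ico_inter_stdTriangle_le_mul (by linarith : 0 ≤ a) (by linarith)
  rw [indicator_of_mem hc, Pi.one_apply, abs_sub_comm]
  calc 1 - 2 * a ^ 2 ≤ 1 - 2 * volume.real (Ico 0 a ×ˢ Ico 0 a ∩ stdTriangle) := by nlinarith
    _ ≤ _ := le_abs_self _

theorem sdisc_parlg_inter_triangle_ctr {A B C : Pt} (h : Nondeg A B C) (a b : ℝ) :
    sdisc (parlg A B C a b ∩ triangle A B C) (fun _ : Fin 1 => ctr (A, B, C)) (triangle A B C)
      = 2 * volume.real (Ico 0 a ×ˢ Ico 0 b ∩ stdTriangle)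
        - (Ico 0 a ×ˢ Ico 0 b ∩ stdTriangle).indicator 1 (3⁻¹, 3⁻¹) := by
  have hinj := triCoord_injective h
  rw [sdisc_fin_one, ← image_triCoord_Ico_prod_Ico, ← image_triCoord_stdTriangle,
    ← image_inter hinj, inter_eq_left.2 (image_mono inter_subset_right), ← triCoord_third,
    indicator_image hinj, vol, vol, toReal_addHaar_image_div_of_injective volume hinj,
    volume_stdTriangle, ENNReal.toReal_ofReal (by norm_num), div_inv_eq_mul, mul_comm,
    measureReal_def]
  rfl

section Symmetry

variable {α : Type*} {A B C : α}

theorem insert_insert_singleton_rotate : ({B, C, A} : Set α) = {A, B, C} := by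
  ext; simp only [mem_insert_iff, mem_singleton_iff]; tauto

theorem insert_insert_singleton_swap : ({A, C, B} : Set α) = {A, B, C} := by
  ext; simp only [mem_insert_iff, mem_singleton_iff]; tauto

end Symmetry

section Relabel

variable {A B C : Pt}

theorem triangle_rotate : triangle B C A = triangle A B C := by
  rw [triangle, triangle, insert_insert_singleton_rotate]

theorem triangle_swap : triangle A C B = triangle A B C := by
  rw [triangle, triangle, insert_insert_singleton_swap]

theorem ctr_rotate : ctr (B, C, A) = ctr (A, B, C) := by
  rw [ctr, ctr]; abel_nf

theorem ctr_swap : ctr (A, C, B) = ctr (A, B, C) := by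
  rw [ctr, ctr]; abel_nf

theorem abs_sdisc_le_of_mem_anchoredFam (h : Nondeg A B C) {S : Set Pt}
    (hS : S ∈ anchoredFam A B C) :
    |sdisc S (fun _ : Fin 1 => ctr (A, B, C)) (triangle A B C)| ≤ 7 / 9 := by
  obtain ⟨a, b, ha, ha1, hb, hb1, rfl⟩ := hS
  rw [sdisc_parlg_inter_triangle_ctr h]
  exact abs_two_mul_volume_real_sub_indicator_le ha.le ha1 hb.le hb1

theorem abs_sdisc_le_of_mem_parFam (h : Nondeg A B C) {S : Set Pt} (hS : S ∈ parFam A B C) :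
    |sdisc S (fun _ : Fin 1 => ctr (A, B, C)) (triangle A B C)| ≤ 7 / 9 := by
  rcases hS with (hS | hS) | hS
  · have := abs_sdisc_le_of_mem_anchoredFam (by rwa [Nondeg, insert_insert_singleton_rotate]) hS
    rwa [triangle_rotate, ctr_rotate] at this
  · have := abs_sdisc_le_of_mem_anchoredFam (by rwa [Nondeg, insert_insert_singleton_swap]) hS
    rwa [triangle_swap, ctr_swap] at this
  · exact abs_sdisc_le_of_mem_anchoredFam h hS

end Relabel

/-- the parallelogram discrepancy of the single-point list consisting of
the centroid `f_Ω(0)` of a nondegenerate triangle `Ω = Δ(A,B,C)` equals `7/9`. -/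
theorem parDisc_centroid_eq (A B C : Pt) (h : Nondeg A B C) :
    parDisc (fun _ : Fin 1 => vdc (A, B, C) 0) A B C = 7 / 9 := by
  rw [parDisc, Disc, vdc, dif_pos rfl]
  refine Real.biSup_eq_of_forall_le_of_forall_lt_exists_gt (by norm_num)
    (fun S hS => abs_sdisc_le_of_mem_parFam h hS) fun w hw => ?_
  have hlim : Tendsto (fun a : ℝ => 1 - 2 * a ^ 2) (𝓝[>] 3⁻¹) (𝓝 (7 / 9)) :=
    tendsto_nhdsWithin_of_tendsto_nhds
      ((by fun_prop : Continuous fun a : ℝ => 1 - 2 * a ^ 2).tendsto' _ _ (by norm_num))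
  have hIoc : ∀ᶠ a in 𝓝[>] (3⁻¹ : ℝ), a ∈ Ioc 3⁻¹ 1 := Ioc_mem_nhdsGT (by norm_num)
  obtain ⟨a, ⟨ha, ha1⟩, hwa⟩ := (hIoc.and (hlim.eventually (lt_mem_nhds hw))).exists
  refine ⟨parlg A B C a a ∩ triangle A B C,
    Or.inr ⟨a, a, by linarith, ha1, by linarith, ha1, rfl⟩, ?_⟩
  rw [sdisc_parlg_inter_triangle_ctr h]
  exact hwa.trans_le (one_sub_two_mul_sq_le_abs_two_mul_volume_real_sub_indicator ha)
end

section
/- Let Ω = Δ(A,B,C) be a nondegenerate triangle in ℝ², let k ≥ 1 be an integer, N = 4^k, and let P = (f_Ω(0), …, f_Ω(N−1)) be the first N triangular van der Corput points of Ω. Then sup_{0 < b ≤ 1} |δ_N(𝒯_{1,b,C} ∩ Ω; P, Ω)| = 2/(3√N) − 1/(9N); that is, the supremum of the absolute signed discrepancy over the full-width parallelogram strips anchored at C equals 2/(3√N) − 1/(9N). -/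
open MeasureTheory Filter Real

/-!
In the coordinates `x = C + s • (A - C) + t • (B - C)` the triangle becomes the standard one
`{s, t ≥ 0, s + t ≤ 1}`. This affine bijection commutes with midpoints and centroids, hence maps
van der Corput points to van der Corput points, and it scales all areas by the same factor, so the
signed discrepancy may be computed on the standard triangle, where the strip is `{t < b}` and has
relative area `2b - b²`.

There only the heights `t` of the points matter. With `K = 2 ^ k = √N`, the level-`k` subdivision
has `K` rows of cells, the first `N` points are the cell centroids, and row `m` contributes `K - m`
points at height `(3m + 1) / (3K)` and `K - m - 1` at height `(3m + 2) / (3K)`. Writing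
`x = 3Kb`, this gives `N δ = (6Kx - x²) / 9 - #{points below b}`. Removing the bottom row turns the
deviation for `K` rows at `x` into the one for `K - 1` rows at `x - 3`, so by induction it is
bounded by its maximum `(6K - 1) / 9` over the bottom row, attained at `x = 1`, where no point is
counted yet.
-/


open scoped Pointwise

section AffineInvariance

variable (f : Pt →ᵃ[ℝ] Pt)

def mapTri (g : Pt → Pt) (T : Tri2) : Tri2 := (g T.1, g T.2.1, g T.2.2)

lemma exists_linear_add_const : ∃ (L : Pt →ₗ[ℝ] Pt) (c : Pt), ∀ x, f x = L x + c :=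
  ⟨f.linear, f 0, fun x => by simpa using congrFun f.decomp x⟩

lemma map_mid (P Q : Pt) : f (mid P Q) = mid (f P) (f Q) := by
  obtain ⟨L, c, hf⟩ := exists_linear_add_const f
  simp only [mid, hf, map_smul, map_add]
  module

lemma map_ctr (T : Tri2) : f (ctr T) = ctr (mapTri f T) := by
  obtain ⟨L, c, hf⟩ := exists_linear_add_const f
  simp only [ctr, mapTri, hf, map_smul, map_add]
  module

lemma subdiv_mapTri (T : Tri2) (d : ℕ) : subdiv (mapTri f T) d = mapTri f (subdiv T d) := by
  unfold subdiv mapTri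
  split_ifs <;> simp [map_mid]

lemma vdc_mapTri (T : Tri2) (i : ℕ) : vdc (mapTri f T) i = f (vdc T i) := by
  induction i using Nat.strong_induction_on generalizing T with
  | _ i ih =>
    rw [vdc.eq_1 (mapTri f T), vdc.eq_1 T]
    split_ifs with hi
    · exact (map_ctr f T).symm
    · rw [subdiv_mapTri, ih _ (Nat.div_lt_self (Nat.pos_of_ne_zero hi) (by norm_num))]

lemma triangle_map (A B C : Pt) : triangle (f A) (f B) (f C) = f '' triangle A B C := by
  simp [triangle, f.image_convexHull, Set.image_insert_eq]

lemma map_parlg_point (A B C : Pt) (s t : ℝ) :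
    f (C + s • (A - C) + t • (B - C)) = f C + s • (f A - f C) + t • (f B - f C) := by
  obtain ⟨L, c, hf⟩ := exists_linear_add_const f
  simp only [hf, map_smul, map_add, map_sub]
  module

lemma parlg_map (A B C : Pt) (a b : ℝ) :
    parlg (f A) (f B) (f C) a b = f '' parlg A B C a b := by
  ext x
  simp only [parlg, Set.mem_ofPred_eq, Set.mem_image]
  constructor
  · rintro ⟨s, t, hs0, hsa, ht0, htb, rfl⟩
    exact ⟨_, ⟨s, t, hs0, hsa, ht0, htb, rfl⟩, map_parlg_point f A B C s t⟩
  · rintro ⟨_, ⟨s, t, hs0, hsa, ht0, htb, rfl⟩, rfl⟩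
    exact ⟨s, t, hs0, hsa, ht0, htb, map_parlg_point f A B C s t⟩

lemma vol_image_affineMap (s : Set Pt) :
    vol (f '' s) = |LinearMap.det f.linear| * vol s := by
  have himage : f '' s = f 0 +ᵥ f.linear '' s := by
    rw [← Set.image_vadd, Set.image_image]
    congr 1
    funext x
    simpa [add_comm] using congrFun f.decomp x
  rw [vol, himage, measure_vadd, Measure.addHaar_image_linearMap, ENNReal.toReal_mul,
    ENNReal.toReal_ofReal (abs_nonneg _), vol]

lemma sdisc_image {N : ℕ} (hf : Function.Injective f) (S Ω : Set Pt) (P : Fin N → Pt) :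
    sdisc (f '' S) (fun i => f (P i)) (f '' Ω) = sdisc S P Ω := by
  have hdet : |LinearMap.det f.linear| ≠ 0 :=
    abs_ne_zero.2 (LinearMap.isUnit_det _ ((LinearMap.isUnit_iff_ker_eq_bot _).2
      (LinearMap.ker_eq_bot.2 ((f.linear_injective_iff).2 hf)))).ne_zero
  simp only [sdisc, ← Set.image_inter hf, vol_image_affineMap, hf.mem_set_image,
    mul_div_mul_left _ _ hdet]

lemma sdisc_strip_map (hf : Function.Injective f) (A B C : Pt) (a b : ℝ) (N : ℕ) :
    sdisc (parlg (f A) (f B) (f C) a b ∩ triangle (f A) (f B) (f C))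
        (fun i : Fin N => vdc (f A, f B, f C) i) (triangle (f A) (f B) (f C))
      = sdisc (parlg A B C a b ∩ triangle A B C) (fun i : Fin N => vdc (A, B, C) i)
        (triangle A B C) := by
  rw [parlg_map, triangle_map, ← Set.image_inter hf]
  simp only [show (f A, f B, f C) = mapTri f (A, B, C) from rfl, vdc_mapTri]
  exact sdisc_image f hf _ _ _

end AffineInvariance

section Barycentric

def baryMap (A B C : Pt) : Pt →ᵃ[ℝ] Pt where
  toFun p := C + p.1 • (A - C) + p.2 • (B - C)
  linear :=
    (LinearMap.fst ℝ ℝ ℝ).smulRight (A - C) + (LinearMap.snd ℝ ℝ ℝ).smulRight (B - C)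
  map_vadd' p v := by
    simp only [vadd_eq_add, Prod.fst_add, Prod.snd_add, LinearMap.add_apply,
      LinearMap.smulRight_apply, LinearMap.fst_apply, LinearMap.snd_apply]
    module

variable {A B C : Pt}

@[simp] lemma baryMap_apply (p : Pt) :
    baryMap A B C p = C + p.1 • (A - C) + p.2 • (B - C) := rfl

lemma baryMap_injective (h : Nondeg A B C) : Function.Injective (baryMap A B C) := by
  rw [← AffineMap.linear_injective_iff, ← LinearMap.ker_eq_bot]
  contrapose! h
  set L := (baryMap A B C).linear
  have hspan : vectorSpan ℝ {A, B, C} ≤ LinearMap.range L := by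
    have : ({A, B, C} : Set Pt) = baryMap A B C '' {(1, 0), (0, 1), 0} := by
      simp [Set.image_insert_eq]
    rw [this, ← AffineMap.map_vectorSpan]
    exact LinearMap.map_le_range
  have hker : 1 ≤ Module.finrank ℝ (LinearMap.ker L) :=
    Submodule.one_le_finrank_iff.2 h
  have hrank := L.finrank_range_add_finrank_ker
  rw [Module.finrank_prod, Module.finrank_self] at hrank
  rw [Nondeg, not_not, collinear_iff_finrank_le_one]
  have := Submodule.finrank_mono hspan
  omega

lemma sdisc_strip_eq_std (h : Nondeg A B C) (N : ℕ) (b : ℝ) :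
    sdisc (parlg A B C 1 b ∩ triangle A B C) (fun i : Fin N => vdc (A, B, C) i) (triangle A B C)
      = sdisc (parlg (1, 0) (0, 1) 0 1 b ∩ triangle (1, 0) (0, 1) 0)
          (fun i : Fin N => vdc ((1, 0), (0, 1), 0) i) (triangle (1, 0) (0, 1) 0) := by
  simpa using sdisc_strip_map _ (baryMap_injective h) (1, 0) (0, 1) 0 1 b N

end Barycentric

section StandardTriangle

open Set

lemma triangle_std :
    triangle (1, 0) (0, 1) 0 = {p : Pt | 0 ≤ p.1 ∧ 0 ≤ p.2 ∧ p.1 + p.2 ≤ 1} := by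
  apply Subset.antisymm
  · refine convexHull_min ?_ ?_
    · simp [insert_subset_iff]
    · rintro p ⟨hp1, hp2, hp⟩ q ⟨hq1, hq2, hq⟩ s t hs ht hst
      simp only [mem_ofPred_eq, Prod.fst_add, Prod.snd_add, Prod.smul_fst, Prod.smul_snd,
        smul_eq_mul]
      refine ⟨by positivity, by positivity, by nlinarith⟩
  · rintro ⟨x, y⟩ ⟨hx, hy, hxy⟩
    have hmem := (convex_convexHull ℝ ({(1, 0), (0, 1), 0} : Set Pt)).sum_mem
      (t := Finset.univ) (w := ![x, y, 1 - x - y]) (z := ![(1, 0), (0, 1), 0])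
      (by simp [Fin.forall_fin_succ]; exact ⟨hx, hy, by linarith⟩)
      (by simp [Fin.sum_univ_three])
      (fun i _ => subset_convexHull ℝ _ (by fin_cases i <;> simp))
    simpa [triangle, Fin.sum_univ_three] using hmem

lemma parlg_std (a b : ℝ) : parlg (1, 0) (0, 1) 0 a b = Ico 0 a ×ˢ Ico 0 b := by
  ext ⟨x, y⟩
  simp only [parlg, mem_ofPred_eq, mem_prod, mem_Ico]
  constructor
  · rintro ⟨s, t, hs0, hsa, ht0, htb, h⟩
    simp only [sub_zero, zero_add, Prod.ext_iff, Prod.fst_add, Prod.snd_add, Prod.smul_fst,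
      Prod.smul_snd, smul_eq_mul] at h
    obtain ⟨rfl, rfl⟩ : x = s ∧ y = t := by constructor <;> linarith [h.1, h.2]
    exact ⟨⟨hs0, hsa⟩, ht0, htb⟩
  · rintro ⟨⟨hx0, hxa⟩, hy0, hyb⟩
    exact ⟨x, y, hx0, hxa, hy0, hyb, by ext <;> simp⟩

lemma volume_eq_ofReal_of_Ico_subset {s : Set ℝ} {c : ℝ} (h₁ : Ico 0 c ⊆ s)
    (h₂ : s ⊆ Icc 0 c) : volume s = ENNReal.ofReal c :=
  le_antisymm ((measure_mono h₂).trans_eq (by simp)) ((by simp : _ = volume (Ico 0 c)).trans_le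
    (measure_mono h₁))

lemma volume_eq_lintegral_of_slices {S : Set (ℝ × ℝ)} (hS : MeasurableSet S) {I : Set ℝ}
    (hI : MeasurableSet I) (g : ℝ → ℝ)
    (hin : ∀ y ∈ I, Ico 0 (g y) ⊆ {x | (x, y) ∈ S} ∧ {x | (x, y) ∈ S} ⊆ Icc 0 (g y))
    (hout : ∀ y ∉ I, ∀ x, (x, y) ∉ S) :
    volume S = ∫⁻ y in I, ENNReal.ofReal (g y) := by
  rw [Measure.volume_eq_prod, Measure.prod_apply_symm hS, ← lintegral_indicator hI]
  congr 1
  funext y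
  by_cases hy : y ∈ I
  · rw [indicator_of_mem hy]
    exact volume_eq_ofReal_of_Ico_subset (hin y hy).1 (hin y hy).2
  · have hempty : (fun x => (x, y)) ⁻¹' S = ∅ := eq_empty_of_forall_notMem (hout y hy)
    rw [indicator_of_notMem hy, hempty, measure_empty]

lemma lintegral_Ico_one_sub {b : ℝ} (hb0 : 0 ≤ b) (hb1 : b ≤ 1) :
    ∫⁻ y in Ico 0 b, ENNReal.ofReal (1 - y) = ENNReal.ofReal (b - b ^ 2 / 2) := by
  rw [← ofReal_integral_eq_lintegral_ofReal, integral_Ico_eq_integral_Ioc,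
    ← intervalIntegral.integral_of_le hb0, intervalIntegral.integral_sub intervalIntegrable_const
      intervalIntegral.intervalIntegrable_id, integral_id]
  · simp
  · exact (continuous_const.sub continuous_id).integrableOn_Icc.mono_set Ico_subset_Icc_self
  · filter_upwards [ae_restrict_mem measurableSet_Ico] with y hy
    simp only [Pi.zero_apply]
    linarith [hy.2]

lemma measurableSet_triangle (A B C : Pt) : MeasurableSet (triangle A B C) :=
  (toFinite {A, B, C}).isCompact_convexHull (𝕜 := ℝ) |>.isClosed.measurableSet

lemma vol_triangle_std : vol (triangle (1, 0) (0, 1) 0) = 1 / 2 := by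
  rw [vol, volume_eq_lintegral_of_slices (measurableSet_triangle _ _ _) measurableSet_Icc
    (fun y => 1 - y), setLIntegral_congr Ico_ae_eq_Icc.symm,
    lintegral_Ico_one_sub zero_le_one le_rfl]
  · norm_num
  · intro y hy
    simp only [mem_Icc] at hy
    constructor <;> intro x hx <;>
      simp only [triangle_std, mem_ofPred_eq, mem_Ico, mem_Icc] at hx ⊢
    · exact ⟨hx.1, hy.1, by linarith⟩
    · exact ⟨hx.1, by linarith⟩
  · intro y hy x hx
    simp only [triangle_std, mem_ofPred_eq, mem_Icc] at hx hy
    exact hy ⟨hx.2.1, by linarith⟩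

lemma vol_strip_std {b : ℝ} (hb0 : 0 ≤ b) (hb1 : b ≤ 1) :
    vol (parlg (1, 0) (0, 1) 0 1 b ∩ triangle (1, 0) (0, 1) 0) = b - b ^ 2 / 2 := by
  have hS : MeasurableSet (parlg (1, 0) (0, 1) 0 1 b ∩ triangle (1, 0) (0, 1) 0) := by
    rw [parlg_std]
    exact (measurableSet_Ico.prod measurableSet_Ico).inter (measurableSet_triangle _ _ _)
  rw [vol, volume_eq_lintegral_of_slices hS measurableSet_Ico (fun y => 1 - y),
    lintegral_Ico_one_sub hb0 hb1, ENNReal.toReal_ofReal (by nlinarith)]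
  · intro y hy
    simp only [mem_Ico] at hy
    constructor <;> intro x hx <;>
      simp only [parlg_std, triangle_std, mem_inter_iff, mem_prod, mem_ofPred_eq, mem_Ico,
        mem_Icc] at hx ⊢
    · exact ⟨⟨⟨hx.1, by linarith⟩, hy⟩, hx.1, hy.1, by linarith⟩
    · exact ⟨hx.1.1.1, by linarith⟩
  · intro y hy x hx
    simp only [parlg_std, mem_inter_iff, mem_prod, mem_Ico] at hx hy
    exact hy hx.1.2

end StandardTriangle

section VanDerCorput

lemma vdc_zero (T : Tri2) : vdc T 0 = ctr T := by
  rw [vdc]; rfl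

lemma ctr_subdiv_zero (T : Tri2) : ctr (subdiv T 0) = ctr T := by
  simp only [ctr, subdiv, mid, if_pos]
  module

lemma vdc_four_mul_add (T : Tri2) (j : ℕ) {d : ℕ} (hd : d < 4) :
    vdc T (4 * j + d) = vdc (subdiv T d) j := by
  rcases Nat.eq_zero_or_pos (4 * j + d) with h | h
  · obtain ⟨rfl, rfl⟩ : j = 0 ∧ d = 0 := by omega
    rw [vdc_zero, vdc_zero, ctr_subdiv_zero]
  · rw [vdc, dif_neg h.ne', show (4 * j + d) % 4 = d by omega, show (4 * j + d) / 4 = j by omega]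

lemma sum_range_mul_eq_sum_sum {M : Type*} [AddCommMonoid M] (g : ℕ → M) (m n : ℕ) :
    ∑ i ∈ Finset.range (m * n), g i
      = ∑ j ∈ Finset.range n, ∑ d ∈ Finset.range m, g (m * j + d) := by
  induction n with
  | zero => simp
  | succ n ih => rw [Nat.mul_succ, Finset.sum_range_add, ih, Finset.sum_range_succ]

lemma sum_vdc_pow_succ {M : Type*} [AddCommMonoid M] (ψ : Pt → M) (T : Tri2) (k : ℕ) :
    ∑ i ∈ Finset.range (4 ^ (k + 1)), ψ (vdc T i)
      = ∑ d ∈ Finset.range 4, ∑ j ∈ Finset.range (4 ^ k), ψ (vdc (subdiv T d) j) := by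
  rw [pow_succ', sum_range_mul_eq_sum_sum, Finset.sum_comm]
  refine Finset.sum_congr rfl fun d hd => Finset.sum_congr rfl fun j _ => ?_
  rw [vdc_four_mul_add T j (Finset.mem_range.1 hd)]

lemma vdc_mem_of_convex {s : Set Pt} (hs : Convex ℝ s) (i : ℕ) (T : Tri2)
    (hT : T.1 ∈ s ∧ T.2.1 ∈ s ∧ T.2.2 ∈ s) : vdc T i ∈ s := by
  have hmid : ∀ {P Q}, P ∈ s → Q ∈ s → mid P Q ∈ s := fun hP hQ => by
    simpa [mid, smul_add] using hs hP hQ (by norm_num) (by norm_num) (by norm_num)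
  induction i using Nat.strong_induction_on generalizing T with
  | _ i ih =>
    obtain ⟨hA, hB, hC⟩ := hT
    rw [vdc]
    split_ifs with hi
    · have := hs.sum_mem (t := Finset.univ) (w := fun _ : Fin 3 => (3⁻¹ : ℝ))
        (z := ![T.1, T.2.1, T.2.2]) (by simp) (by norm_num)
        (by simp [Fin.forall_fin_succ, hA, hB, hC])
      simpa [ctr, Fin.sum_univ_three, smul_add] using this
    · refine ih _ (Nat.div_lt_self (Nat.pos_of_ne_zero hi) (by norm_num)) _ ?_
      have hAB := hmid hA hB
      have hAC := hmid hA hC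
      have hBC := hmid hB hC
      simp only [subdiv]
      split_ifs <;> exact ⟨‹_›, ‹_›, ‹_›⟩

/-- Triangles on the second axis: by `vdc_mapTri` applied to the projection onto that axis, their
van der Corput points have the heights of those of any triangle whose vertices have heights
`(a, a + h, a)`, resp. `(a + h, a, a + h)`. -/
def upTri (a h : ℝ) : Tri2 := ((0, a), (0, a + h), (0, a))

def downTri (a h : ℝ) : Tri2 := ((0, a + h), (0, a), (0, a + h))

lemma subdiv_upTri (a h : ℝ) :
    subdiv (upTri a (2 * h)) 0 = downTri a h ∧ subdiv (upTri a (2 * h)) 1 = upTri a h ∧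
      subdiv (upTri a (2 * h)) 2 = upTri (a + h) h ∧ subdiv (upTri a (2 * h)) 3 = upTri a h := by
  refine ⟨?_, ?_, ?_, ?_⟩ <;> simp [subdiv, upTri, downTri, mid, Prod.ext_iff] <;> ring_nf <;>
    simp

lemma subdiv_downTri (a h : ℝ) :
    subdiv (downTri a (2 * h)) 0 = upTri (a + h) h ∧
      subdiv (downTri a (2 * h)) 1 = downTri (a + h) h ∧
      subdiv (downTri a (2 * h)) 2 = downTri a h ∧
      subdiv (downTri a (2 * h)) 3 = downTri (a + h) h := by
  refine ⟨?_, ?_, ?_, ?_⟩ <;> simp [subdiv, upTri, downTri, mid, Prod.ext_iff] <;> ring_nf <;>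
    simp

end VanDerCorput

noncomputable section Heights

/-- `ψ` summed over the heights, in units `e` above `a`, of the cell centroids of
`upTri a (3 * K * e)` at level `K = 2 ^ k`: row `m` holds `K - m` upright cells at height `3m + 1`
and `K - m - 1` inverted ones at height `3m + 2`. In `downTri` the counts are `m` and `m + 1`. -/
def upGridSum (K : ℕ) (ψ : ℕ → ℝ) : ℝ :=
  ∑ m ∈ Finset.range K, ((K - m : ℝ) * ψ (3 * m + 1) + (K - m - 1 : ℝ) * ψ (3 * m + 2))

def downGridSum (K : ℕ) (ψ : ℕ → ℝ) : ℝ :=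
  ∑ m ∈ Finset.range K, ((m : ℝ) * ψ (3 * m + 1) + (m + 1 : ℝ) * ψ (3 * m + 2))

lemma upGridSum_two_mul (K : ℕ) (ψ : ℕ → ℝ) :
    upGridSum (2 * K) ψ
      = downGridSum K ψ + 2 * upGridSum K ψ + upGridSum K (fun j => ψ (3 * K + j)) := by
  rw [upGridSum, upGridSum, upGridSum, downGridSum, two_mul K, Finset.sum_range_add,
    Finset.mul_sum, ← Finset.sum_add_distrib, ← Finset.sum_add_distrib, ← Finset.sum_add_distrib]
  refine Finset.sum_congr rfl fun m _ => ?_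
  rw [show 3 * (K + m) + 1 = 3 * K + (3 * m + 1) by ring,
    show 3 * (K + m) + 2 = 3 * K + (3 * m + 2) by ring]
  push_cast
  ring

lemma downGridSum_two_mul (K : ℕ) (ψ : ℕ → ℝ) :
    downGridSum (2 * K) ψ = downGridSum K ψ + upGridSum K (fun j => ψ (3 * K + j))
      + 2 * downGridSum K (fun j => ψ (3 * K + j)) := by
  rw [upGridSum, downGridSum, downGridSum, downGridSum, two_mul K, Finset.sum_range_add,
    Finset.mul_sum, ← Finset.sum_add_distrib, ← Finset.sum_add_distrib, ← Finset.sum_add_distrib]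
  refine Finset.sum_congr rfl fun m _ => ?_
  rw [show 3 * (K + m) + 1 = 3 * K + (3 * m + 1) by ring,
    show 3 * (K + m) + 2 = 3 * K + (3 * m + 2) by ring]
  push_cast
  ring

theorem sum_vdc_upTri_downTri (φ : ℝ → ℝ) (e : ℝ) (k : ℕ) (a : ℝ) :
    ∑ i ∈ Finset.range (4 ^ k), φ (vdc (upTri a (3 * 2 ^ k * e)) i).2
        = upGridSum (2 ^ k) (fun j => φ (a + j * e)) ∧
      ∑ i ∈ Finset.range (4 ^ k), φ (vdc (downTri a (3 * 2 ^ k * e)) i).2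
        = downGridSum (2 ^ k) (fun j => φ (a + j * e)) := by
  induction k generalizing a with
  | zero =>
    simp only [pow_zero, Finset.sum_range_one, vdc_zero, upGridSum, downGridSum]
    constructor <;> norm_num [ctr, upTri, downTri] <;> congr 1 <;> ring
  | succ k ih =>
    have hshift : (fun j : ℕ => φ (a + ((3 * 2 ^ k + j : ℕ) : ℝ) * e))
        = fun j : ℕ => φ ((a + 3 * 2 ^ k * e) + j * e) := by
      funext j; push_cast; ring_nf
    obtain ⟨u0, u1, u2, u3⟩ := subdiv_upTri a (3 * 2 ^ k * e)
    obtain ⟨d0, d1, d2, d3⟩ := subdiv_downTri a (3 * 2 ^ k * e)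
    rw [show 3 * 2 ^ (k + 1) * e = 2 * (3 * 2 ^ k * e) by ring, sum_vdc_pow_succ (fun p => φ p.2),
      sum_vdc_pow_succ (fun p => φ p.2), pow_succ' 2 k]
    simp only [Finset.sum_range_succ, Finset.sum_range_zero, zero_add, u0, u1, u2, u3, d0, d1, d2,
      d3, (ih a).1, (ih a).2, (ih _).1, (ih _).2, upGridSum_two_mul, downGridSum_two_mul, hshift]
    constructor <;> ring

def stripCount (K : ℕ) (x : ℝ) : ℝ := upGridSum K (fun j => if (j : ℝ) < x then 1 else 0)

/-- `N δ_N` for the strip of height `b = x / (3K)` in the standard triangle, `K = √N`. -/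
def stripDev (K : ℕ) (x : ℝ) : ℝ := (6 * K * x - x ^ 2) / 9 - stripCount K x

lemma stripCount_eq_zero (K : ℕ) {x : ℝ} (hx : x ≤ 1) : stripCount K x = 0 := by
  rw [stripCount, upGridSum]
  refine Finset.sum_eq_zero fun m _ => ?_
  have hm : (0 : ℝ) ≤ m := m.cast_nonneg
  rw [if_neg (by push_cast; linarith), if_neg (by push_cast; linarith)]
  ring

lemma stripCount_succ (K : ℕ) (x : ℝ) :
    stripCount (K + 1) x = (K + 1) * (if 1 < x then 1 else 0) + K * (if 2 < x then 1 else 0)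
      + stripCount K (x - 3) := by
  rw [stripCount, upGridSum, Finset.sum_range_succ', add_comm, stripCount, upGridSum]
  congr 1
  · simp
  · refine Finset.sum_congr rfl fun m _ => ?_
    have h1 : ((3 * (m + 1) + 1 : ℕ) : ℝ) < x ↔ ((3 * m + 1 : ℕ) : ℝ) < x - 3 := by
      push_cast; constructor <;> intro h <;> linarith
    have h2 : ((3 * (m + 1) + 2 : ℕ) : ℝ) < x ↔ ((3 * m + 2 : ℕ) : ℝ) < x - 3 := by
      push_cast; constructor <;> intro h <;> linarith
    rw [if_congr h1 rfl rfl, if_congr h2 rfl rfl]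
    push_cast
    ring

lemma stripDev_succ (K : ℕ) {x : ℝ} (hx : 2 < x) : stripDev (K + 1) x = stripDev K (x - 3) := by
  rw [stripDev, stripDev, stripCount_succ, if_pos (by linarith), if_pos hx]
  push_cast
  ring

lemma abs_stripDev_le_of_le_three {K : ℕ} (hK : 1 ≤ K) {x : ℝ} (hx0 : 0 < x) (hx3 : x ≤ 3) :
    |stripDev K x| ≤ (6 * K - 1) / 9 := by
  obtain ⟨n, rfl⟩ : ∃ n, K = n + 1 := ⟨K - 1, by omega⟩
  have hn : (0 : ℝ) ≤ n := n.cast_nonneg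
  rw [stripDev, stripCount_succ, stripCount_eq_zero n (by linarith), abs_le]
  push_cast
  split_ifs with h1 h2 h2
  · constructor <;> nlinarith
  · constructor <;> nlinarith
  · linarith
  · constructor <;> nlinarith

theorem abs_stripDev_le {K : ℕ} (hK : 1 ≤ K) {x : ℝ} (hx0 : 0 < x) (hx : x ≤ 3 * K) :
    |stripDev K x| ≤ (6 * K - 1) / 9 := by
  induction K, hK using Nat.le_induction generalizing x with
  | base => exact abs_stripDev_le_of_le_three le_rfl hx0 (by simpa using hx)
  | succ K hK ih =>
    rcases le_or_gt x 3 with hx3 | hx3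
    · exact abs_stripDev_le_of_le_three (by omega) hx0 hx3
    · rw [stripDev_succ K (by linarith)]
      push_cast at hx ⊢
      linarith [ih (x := x - 3) (by linarith) (by linarith)]

lemma stripDev_one (K : ℕ) : stripDev K 1 = (6 * K - 1) / 9 := by
  rw [stripDev, stripCount_eq_zero K le_rfl]
  ring

lemma sum_vdc_std_snd_lt (k : ℕ) (b : ℝ) :
    ∑ i ∈ Finset.range (4 ^ k), (if (vdc ((1, 0), (0, 1), 0) i).2 < b then 1 else 0 : ℝ)
      = stripCount (2 ^ k) (3 * 2 ^ k * b) := by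
  let proj : Pt →ᵃ[ℝ] Pt := ((LinearMap.inr ℝ ℝ ℝ).comp (LinearMap.snd ℝ ℝ ℝ)).toAffineMap
  have hE : upTri 0 (3 * 2 ^ k * (3 * 2 ^ k)⁻¹) = mapTri proj ((1, 0), (0, 1), 0) := by
    rw [mul_inv_cancel₀ (by positivity)]
    simp [upTri, mapTri, proj]
  have hsnd : ∀ i, (vdc ((1, 0), (0, 1), 0) i).2
      = (vdc (upTri 0 (3 * 2 ^ k * (3 * 2 ^ k)⁻¹)) i).2 := by
    intro i
    rw [hE, vdc_mapTri]
    rfl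
  simp only [hsnd]
  refine (sum_vdc_upTri_downTri (fun y => if y < b then 1 else 0) _ k 0).1.trans ?_
  rw [stripCount]
  congr 1
  funext j
  simp only [zero_add, ← div_eq_mul_inv, div_lt_iff₀ (by positivity : (0 : ℝ) < 3 * 2 ^ k),
    mul_comm b]

lemma snd_vdc_std_pos (k : ℕ) {i : ℕ} (hi : i < 4 ^ k) : 0 < (vdc ((1, 0), (0, 1), 0) i).2 := by
  have hsum := sum_vdc_std_snd_lt k (3 * 2 ^ k)⁻¹
  rw [mul_inv_cancel₀ (by positivity), stripCount_eq_zero _ le_rfl,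
    Finset.sum_eq_zero_iff_of_nonneg (fun _ _ => by positivity)] at hsum
  have := hsum i (Finset.mem_range.2 hi)
  simp only [ite_eq_right_iff, one_ne_zero, imp_false, not_lt] at this
  exact lt_of_lt_of_le (by positivity) this

lemma sdisc_std_strip (k : ℕ) {b : ℝ} (hb0 : 0 ≤ b) (hb1 : b ≤ 1) :
    sdisc (parlg (1, 0) (0, 1) 0 1 b ∩ triangle (1, 0) (0, 1) 0)
      (fun i : Fin (4 ^ k) => vdc ((1, 0), (0, 1), 0) (i : ℕ)) (triangle (1, 0) (0, 1) 0)
      = stripDev (2 ^ k) (3 * 2 ^ k * b) / (2 ^ k) ^ 2 := by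
  classical
  have hmem : ∀ i < 4 ^ k, vdc ((1, 0), (0, 1), 0) i ∈ parlg (1, 0) (0, 1) 0 1 b ∩
      triangle (1, 0) (0, 1) 0 ↔ (vdc ((1, 0), (0, 1), 0) i).2 < b := by
    intro i hi
    have hT : vdc ((1, 0), (0, 1), 0) i ∈ triangle (1, 0) (0, 1) 0 :=
      vdc_mem_of_convex (convex_convexHull ℝ _) i _
      ⟨subset_convexHull ℝ _ (by simp), subset_convexHull ℝ _ (by simp),
        subset_convexHull ℝ _ (by simp)⟩
    -- the points avoid the side `t = 0`, in particular the vertex `(1, 0)` that the strip omits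
    have hpos := snd_vdc_std_pos k hi
    simp only [triangle_std, parlg_std, Set.mem_inter_iff, Set.mem_prod, Set.mem_Ico,
      Set.mem_ofPred_eq] at hT ⊢
    exact ⟨fun h => h.1.2.2, fun h => ⟨⟨⟨hT.1, by linarith⟩, hT.2.1, h⟩, hT⟩⟩
  have hcard : (Nat.card {i : Fin (4 ^ k) // vdc ((1, 0), (0, 1), 0) (i : ℕ) ∈
      parlg (1, 0) (0, 1) 0 1 b ∩ triangle (1, 0) (0, 1) 0} : ℝ)
      = stripCount (2 ^ k) (3 * 2 ^ k * b) := by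
    rw [Nat.card_eq_fintype_card, Fintype.card_subtype, Finset.natCast_card_filter,
      Fin.sum_univ_eq_sum_range (fun i => if vdc ((1, 0), (0, 1), 0) i ∈
        parlg (1, 0) (0, 1) 0 1 b ∩ triangle (1, 0) (0, 1) 0 then (1 : ℝ) else 0),
      ← sum_vdc_std_snd_lt]
    exact Finset.sum_congr rfl fun i hi => if_congr (hmem i (Finset.mem_range.1 hi)) rfl rfl
  rw [sdisc, Set.inter_assoc, Set.inter_self, vol_strip_std hb0 hb1, vol_triangle_std, hcard,
    stripDev]
  have h4 : (4 : ℝ) ^ k = (2 ^ k) ^ 2 := by rw [← pow_mul, mul_comm, pow_mul]; norm_num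
  push_cast
  rw [h4]
  field_simp
  ring

lemma abs_sdisc_std_strip_le (k : ℕ) {b : ℝ} (hb : b ∈ Set.Ioc (0 : ℝ) 1) :
    |sdisc (parlg (1, 0) (0, 1) 0 1 b ∩ triangle (1, 0) (0, 1) 0)
      (fun i : Fin (4 ^ k) => vdc ((1, 0), (0, 1), 0) (i : ℕ)) (triangle (1, 0) (0, 1) 0)|
      ≤ (6 * 2 ^ k - 1) / 9 / (2 ^ k) ^ 2 := by
  rw [sdisc_std_strip k hb.1.le hb.2, abs_div, abs_of_pos (by positivity : (0 : ℝ) < (2 ^ k) ^ 2)]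
  gcongr
  have hK : (1 : ℝ) ≤ 2 ^ k := one_le_pow₀ (by norm_num)
  have := abs_stripDev_le Nat.one_le_two_pow (mul_pos (by positivity) hb.1)
    (x := 3 * 2 ^ k * b) (by push_cast; nlinarith [hb.2])
  push_cast at this
  exact this

lemma sdisc_std_strip_lowest (k : ℕ) :
    sdisc (parlg (1, 0) (0, 1) 0 1 (3 * 2 ^ k)⁻¹ ∩ triangle (1, 0) (0, 1) 0)
      (fun i : Fin (4 ^ k) => vdc ((1, 0), (0, 1), 0) (i : ℕ)) (triangle (1, 0) (0, 1) 0)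
      = (6 * 2 ^ k - 1) / 9 / (2 ^ k) ^ 2 := by
  have hK : (1 : ℝ) ≤ 2 ^ k := one_le_pow₀ (by norm_num)
  rw [sdisc_std_strip k (by positivity) (inv_le_one_of_one_le₀ (by linarith)),
    mul_inv_cancel₀ (by positivity), stripDev_one]
  push_cast
  rfl

end Heights

/-- `0 ≤ M` is needed since the inner supremum over an empty index is `0`. -/
lemma biSup_eq_of_forall_le_of_eq {α : Type*} {I : Set α} {g : α → ℝ} {M : ℝ} (hM : 0 ≤ M)
    (hle : ∀ b ∈ I, g b ≤ M) {b₀ : α} (hb₀ : b₀ ∈ I) (hg : g b₀ = M) : ⨆ b ∈ I, g b = M := by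
  have hle' : ∀ b, ⨆ (_ : b ∈ I), g b ≤ M := fun b => Real.iSup_le (hle b) hM
  refine le_antisymm (Real.iSup_le hle' hM) ?_
  refine le_ciSup_of_le ⟨M, Set.forall_mem_range.2 hle'⟩ b₀ ?_
  rw [ciSup_pos hb₀, hg]

theorem sup_strip_sdisc_eq_general (A B C : Pt) (h : Nondeg A B C) (k : ℕ) :
    (⨆ b ∈ Set.Ioc (0:ℝ) 1,
        |sdisc (parlg A B C 1 b ∩ triangle A B C)
          (fun i : Fin (4 ^ k) => vdc (A, B, C) (i : ℕ)) (triangle A B C)|)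
      = 2 / (3 * Real.sqrt ((4 : ℝ) ^ k)) - 1 / (9 * (4 : ℝ) ^ k) := by
  have hK : (1 : ℝ) ≤ 2 ^ k := one_le_pow₀ (by norm_num)
  have hvalue : 2 / (3 * √((4 : ℝ) ^ k)) - 1 / (9 * (4 : ℝ) ^ k)
      = (6 * 2 ^ k - 1) / 9 / (2 ^ k) ^ 2 := by
    rw [show (4 : ℝ) ^ k = (2 ^ k) ^ 2 by rw [← pow_mul, mul_comm, pow_mul]; norm_num,
      Real.sqrt_sq (by positivity)]
    field_simp
    ring
  have hM : 0 ≤ (6 * 2 ^ k - 1) / 9 / ((2 : ℝ) ^ k) ^ 2 :=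
    div_nonneg (div_nonneg (by linarith) (by norm_num)) (by positivity)
  rw [hvalue]
  refine biSup_eq_of_forall_le_of_eq hM (fun b hb => ?_)
    (⟨by positivity, inv_le_one_of_one_le₀ (by linarith)⟩ : (3 * 2 ^ k : ℝ)⁻¹ ∈ Set.Ioc 0 1) ?_
  · rw [sdisc_strip_eq_std h]
    exact abs_sdisc_std_strip_le k hb
  · rw [sdisc_strip_eq_std h, sdisc_std_strip_lowest, abs_of_nonneg hM]

/-- for `N = 4^k`, `k ≥ 1`, the supremum over `0 < b ≤ 1` of the absolute
signed discrepancy of the first `N` triangular van der Corput points at the full-width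
strips `𝒯_{1,b,C} ∩ Ω` equals `2/(3√N) - 1/(9N)`. -/
theorem sup_strip_sdisc_eq (A B C : Pt) (h : Nondeg A B C) (k : ℕ) (hk : 1 ≤ k) :
    (⨆ b ∈ Set.Ioc (0:ℝ) 1,
        |sdisc (parlg A B C 1 b ∩ triangle A B C)
          (fun i : Fin (4 ^ k) => vdc (A, B, C) (i : ℕ)) (triangle A B C)|)
      = 2 / (3 * Real.sqrt ((4 : ℝ) ^ k)) - 1 / (9 * (4 : ℝ) ^ k) :=
  sup_strip_sdisc_eq_general A B C h k
end

section
/- For any integer k ≥ 0 and N = 4^k, and any nondegenerate triangle T ⊂ ℝ², the map i ↦ f_T(i) restricted to {0, 1, …, N−1} is a bijection onto the set of centroids of the N congruent subtriangles of the standard level-k subdivision of T; in particular, each of those N subtriangles contains exactly one of the points f_T(0), …, f_T(N−1), namely its centroid. -/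
open MeasureTheory Filter Real

/-!
For `i < 4^k` the point `f_T(i)` is the centroid of the level-`k` cell addressed by the base-4
digits of `i`, and these cells make up the level-`k` subdivision. The cells are distinguished by
their van der Corput points because a van der Corput point of one subtriangle `T(d)` never lies in
another subtriangle `T(e)`: the line on which the barycentric coordinate of the vertex of a corner
triangle equals `1/2` separates that corner from the other three subtriangles, and if an affine
function is `≤ u` at the vertices of a triangle and `< u` at its centroid, then the same holds
for each of its four subtriangles, so the function is `< u` at every van der Corput point of the
triangle.
-/

namespace VdC

open Set AffineMap

def verts (T : Tri2) : Fin 3 → Pt := ![T.1, T.2.1, T.2.2]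

lemma nondeg_iff_affineIndependent (T : Tri2) :
    Nondeg T.1 T.2.1 T.2.2 ↔ AffineIndependent ℝ (verts T) :=
  affineIndependent_iff_not_collinear_set.symm

lemma mid_eq_midpoint (P Q : Pt) : mid P Q = midpoint ℝ P Q := by
  rw [midpoint_eq_smul_add, invOf_eq_inv]; rfl

lemma map_mid (φ : Pt →ᵃ[ℝ] ℝ) (P Q : Pt) : φ (mid P Q) = (φ P + φ Q) / 2 := by
  rw [mid_eq_midpoint, φ.map_midpoint, midpoint_eq_smul_add, invOf_eq_inv, smul_eq_mul]; ring

lemma map_ctr (φ : Pt →ᵃ[ℝ] ℝ) (S : Tri2) : φ (ctr S) = (φ S.1 + φ S.2.1 + φ S.2.2) / 3 := by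
  have h (x : Pt) : φ x = φ.linear x + φ 0 := by
    have := φ.linearMap_vsub x 0
    simp only [vsub_eq_sub, sub_zero] at this
    linarith
  rw [ctr, h (_ • _), h S.1, h S.2.1, h S.2.2, map_smul, map_add, map_add, smul_eq_mul]
  ring

lemma ctr_mem_triSet (S : Tri2) : ctr S ∈ triSet S := by
  have hctr : ctr S = ∑ j, (3 : ℝ)⁻¹ • verts S j := by
    simp [Fin.sum_univ_three, verts, ctr, smul_add]
  rw [hctr]
  refine (convex_convexHull ℝ _).sum_mem (by norm_num) (by norm_num) fun j _ => ?_
  exact subset_convexHull ℝ _ (by fin_cases j <;> simp [verts])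

lemma triSet_subdiv_subset (T : Tri2) (d : ℕ) : triSet (subdiv T d) ⊆ triSet T := by
  have hconv : Convex ℝ (triSet T) := convex_convexHull ℝ _
  have hA : T.1 ∈ triSet T := subset_convexHull ℝ _ (by simp)
  have hB : T.2.1 ∈ triSet T := subset_convexHull ℝ _ (by simp)
  have hC : T.2.2 ∈ triSet T := subset_convexHull ℝ _ (by simp)
  have hmid {P Q : Pt} (hP : P ∈ triSet T) (hQ : Q ∈ triSet T) : mid P Q ∈ triSet T := by
    rw [mid_eq_midpoint]; exact hconv.midpoint_mem hP hQ
  refine convexHull_min ?_ hconv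
  unfold subdiv
  split_ifs <;> rintro _ (rfl | rfl | rfl) <;> simp only [hA, hB, hC, hmid]

-- `T(0)` is the image of `T` under the homothety of ratio `-1/2` about the centroid.
lemma verts_subdiv_eq_homothety (T : Tri2) (d : ℕ) :
    ∃ (c : Pt) (r : ℝ), r ≠ 0 ∧ verts (subdiv T d) = homothety c r ∘ verts T := by
  unfold subdiv
  split_ifs <;>
  [refine ⟨ctr T, -2⁻¹, ?_⟩; refine ⟨T.1, 2⁻¹, ?_⟩; refine ⟨T.2.1, 2⁻¹, ?_⟩;
    refine ⟨T.2.2, 2⁻¹, ?_⟩] <;>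
  refine ⟨by norm_num, funext fun j => ?_⟩ <;>
  fin_cases j <;> simp [verts, homothety_apply, mid, ctr, Prod.ext_iff] <;> constructor <;> ring

lemma affineIndependent_verts_subdiv {T : Tri2} (hT : AffineIndependent ℝ (verts T)) (d : ℕ) :
    AffineIndependent ℝ (verts (subdiv T d)) := by
  obtain ⟨c, r, hr, h⟩ := verts_subdiv_eq_homothety T d
  rw [h]
  exact hT.map' _ (homothety_injective c hr)

lemma exists_barycentricCoord {T : Tri2} (hT : AffineIndependent ℝ (verts T)) (i : Fin 3) :
    ∃ φ : Pt →ᵃ[ℝ] ℝ, ∀ j, φ (verts T j) = if i = j then 1 else 0 := by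
  have htop : affineSpan ℝ (range (verts T)) = ⊤ :=
    hT.affineSpan_eq_top_iff_card_eq_finrank_add_one.mpr (by simp)
  let b : AffineBasis (Fin 3) ℝ Pt := ⟨verts T, hT, htop⟩
  exact ⟨b.coord i, b.coord_apply i⟩

lemma ctr_subdiv_zero (T : Tri2) : ctr (subdiv T 0) = ctr T := by
  simp only [subdiv, if_true, ctr, mid, Prod.ext_iff, Prod.fst_add, Prod.snd_add, Prod.smul_fst,
    Prod.smul_snd, smul_eq_mul]
  constructor <;> ring

lemma vdc_eq_vdc_subdiv (T : Tri2) (i : ℕ) : vdc T i = vdc (subdiv T (i % 4)) (i / 4) := by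
  rcases eq_or_ne i 0 with rfl | hi
  · rw [vdc, Nat.zero_mod, Nat.zero_div, vdc, dif_pos rfl, dif_pos rfl, ctr_subdiv_zero]
  · rw [vdc, dif_neg hi]

section Separation

variable {φ : Pt →ᵃ[ℝ] ℝ} {u : ℝ}

def VerticesLe (φ : Pt →ᵃ[ℝ] ℝ) (u : ℝ) (S : Tri2) : Prop :=
  φ S.1 ≤ u ∧ φ S.2.1 ≤ u ∧ φ S.2.2 ≤ u

def StrictlyBelow (φ : Pt →ᵃ[ℝ] ℝ) (u : ℝ) (S : Tri2) : Prop :=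
  VerticesLe φ u S ∧ φ (ctr S) < u

lemma VerticesLe.triSet_subset {S : Tri2} (h : VerticesLe φ u S) :
    triSet S ⊆ {x | φ x ≤ u} := by
  refine convexHull_min ?_ ((convex_Iic u).affine_preimage φ)
  rintro _ (rfl | rfl | rfl)
  exacts [h.1, h.2.1, h.2.2]

lemma strictlyBelow_subdiv {S : Tri2} (h : StrictlyBelow φ u S) (d : ℕ) :
    StrictlyBelow φ u (subdiv S d) := by
  obtain ⟨⟨h1, h2, h3⟩, hc⟩ := h
  rw [map_ctr] at hc
  unfold subdiv
  split_ifs <;>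
  · simp only [StrictlyBelow, VerticesLe, map_ctr, map_mid]
    refine ⟨⟨?_, ?_, ?_⟩, ?_⟩ <;> linarith

lemma StrictlyBelow.map_vdc_lt {S : Tri2} (h : StrictlyBelow φ u S) (m : ℕ) :
    φ (vdc S m) < u := by
  induction m using Nat.strong_induction_on generalizing S with
  | _ m ih =>
    rcases eq_or_ne m 0 with rfl | hm
    · rw [vdc, dif_pos rfl]; exact h.2
    · rw [vdc_eq_vdc_subdiv]
      exact ih _ (Nat.div_lt_self (Nat.pos_of_ne_zero hm) (by norm_num)) (strictlyBelow_subdiv h _)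

def Separated (S S' : Tri2) : Prop :=
  ∃ (φ : Pt →ᵃ[ℝ] ℝ) (u : ℝ), StrictlyBelow φ u S ∧ VerticesLe (-φ) (-u) S'

lemma Separated.vdc_not_mem {S S' : Tri2} (h : Separated S S') (m : ℕ) :
    vdc S m ∉ triSet S' := by
  obtain ⟨φ, u, hS, hS'⟩ := h
  intro hm
  have hle := hS'.triSet_subset hm
  simp only [mem_ofPred_eq, AffineMap.coe_neg, Pi.neg_apply, neg_le_neg_iff] at hle
  exact (hS.map_vdc_lt m).not_ge hle

-- The separating line is where the barycentric coordinate of the vertex of the corner `T(c)`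
-- equals `1/2`.
lemma separated_corner {T : Tri2} (hT : AffineIndependent ℝ (verts T)) {c e : ℕ}
    (hc : c ≠ 0) (hc4 : c < 4) (he : e < 4) (hce : c ≠ e) :
    Separated (subdiv T c) (subdiv T e) ∧ Separated (subdiv T e) (subdiv T c) := by
  obtain ⟨φ, hφ⟩ := exists_barycentricCoord hT ⟨c - 1, by omega⟩
  have hA := hφ 0
  have hB := hφ 1
  have hC := hφ 2
  simp only [verts, Matrix.cons_val] at hA hB hC
  refine ⟨⟨-φ, -2⁻¹, ?_, ?_⟩, ⟨φ, 2⁻¹, ?_, ?_⟩⟩ <;>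
  interval_cases c <;> interval_cases e <;>
  simp_all [StrictlyBelow, VerticesLe, subdiv, map_mid, map_ctr] <;> norm_num

lemma separated_subdiv {T : Tri2} (hT : AffineIndependent ℝ (verts T)) {d e : ℕ}
    (hd : d < 4) (he : e < 4) (hde : d ≠ e) : Separated (subdiv T d) (subdiv T e) := by
  rcases eq_or_ne d 0 with rfl | hd0
  · exact (separated_corner hT hde.symm he hd hde.symm).2
  · exact (separated_corner hT hd0 hd he hde).1

end Separation

-- Digits of `i` are read least significant first, as in `vdc` (and unlike `subdivAt`).
noncomputable def cell : ℕ → Tri2 → ℕ → Tri2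
  | 0, T, _ => T
  | k + 1, T, i => cell k (subdiv T (i % 4)) (i / 4)

lemma vdc_eq_ctr_cell (k : ℕ) (T : Tri2) {i : ℕ} (hi : i < 4 ^ k) :
    vdc T i = ctr (cell k T i) := by
  induction k generalizing T i with
  | zero =>
    rw [pow_zero, Nat.lt_one_iff] at hi
    rw [hi, vdc, dif_pos rfl, cell]
  | succ k ih =>
    rw [pow_succ] at hi
    rw [vdc_eq_vdc_subdiv, cell, ih]
    omega

lemma triSet_cell_subset (k : ℕ) (T : Tri2) (i : ℕ) : triSet (cell k T i) ⊆ triSet T := by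
  induction k generalizing T i with
  | zero => exact subset_rfl
  | succ k ih => exact (ih _ _).trans (triSet_subdiv_subset T _)

lemma mem_level_succ_iff (T : Tri2) (k : ℕ) (S : Tri2) :
    S ∈ level T (k + 1) ↔ ∃ d < 4, S ∈ level (subdiv T d) k := by
  induction k generalizing S with
  | zero => simp [level, eq_comm]
  | succ k ih =>
    constructor
    · rintro ⟨S', hS', e, he, rfl⟩
      obtain ⟨d, hd, hS'⟩ := (ih S').1 hS'
      exact ⟨d, hd, S', hS', e, he, rfl⟩
    · rintro ⟨d, hd, S', hS', e, he, rfl⟩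
      exact ⟨S', (ih S').2 ⟨d, hd, hS'⟩, e, he, rfl⟩

lemma level_eq_image_cell (T : Tri2) (k : ℕ) : level T k = cell k T '' Iio (4 ^ k) := by
  induction k generalizing T with
  | zero => simp [level, cell]
  | succ k ih =>
    ext S
    simp only [mem_level_succ_iff, ih, mem_image, mem_Iio, cell]
    constructor
    · rintro ⟨d, hd, j, hj, rfl⟩
      refine ⟨d + 4 * j, by rw [pow_succ]; omega, ?_⟩
      rw [Nat.add_mul_mod_self_left, Nat.mod_eq_of_lt hd, Nat.add_mul_div_left _ _ (by norm_num),
        Nat.div_eq_of_lt hd, zero_add]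
    · rintro ⟨i, hi, rfl⟩
      rw [pow_succ] at hi
      exact ⟨i % 4, Nat.mod_lt _ (by norm_num), i / 4, by omega, rfl⟩

lemma eq_of_vdc_mem_triSet_cell {k : ℕ} {T : Tri2} (hT : AffineIndependent ℝ (verts T))
    {i j : ℕ} (hi : i < 4 ^ k) (hj : j < 4 ^ k) (h : vdc T i ∈ triSet (cell k T j)) : i = j := by
  induction k generalizing T i j with
  | zero => omega
  | succ k ih =>
    rw [pow_succ] at hi hj
    rw [vdc_eq_vdc_subdiv, cell] at h
    by_cases hij : i % 4 = j % 4
    · rw [hij] at h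
      have := ih (affineIndependent_verts_subdiv hT _) (by omega) (by omega) h
      omega
    · have hsep := separated_subdiv hT (Nat.mod_lt i (by norm_num)) (Nat.mod_lt j (by norm_num)) hij
      exact absurd (triSet_cell_subset k _ _ h) (hsep.vdc_not_mem _)

end VdC

open Set VdC

/-- for `N = 4^k`, the map `i ↦ f_T(i)` is a bijection from `{0,…,N-1}`
onto the set of centroids of the level-`k` subdivision of `T`; in particular each of
the `N` subtriangles contains exactly one of the points `f_T(0),…,f_T(N-1)`,
namely its centroid. -/
theorem vdc_bijOn_centroids (T : Tri2) (h : Nondeg T.1 T.2.1 T.2.2) (k : ℕ) :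
    Set.BijOn (vdc T) (Set.Iio (4 ^ k)) (ctr '' level T k) ∧
    (∀ S ∈ level T k,
      (∃! i : ℕ, i < 4 ^ k ∧ vdc T i ∈ triSet S) ∧
      (∀ i : ℕ, i < 4 ^ k → vdc T i ∈ triSet S → vdc T i = ctr S)) := by
  have hT := (nondeg_iff_affineIndependent T).1 h
  have hvdc : EqOn (vdc T) (ctr ∘ cell k T) (Iio (4 ^ k)) := fun i hi => vdc_eq_ctr_cell k T hi
  have hmem {j : ℕ} (hj : j < 4 ^ k) : vdc T j ∈ triSet (cell k T j) := by
    rw [hvdc hj]; exact ctr_mem_triSet _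
  have hunique {i j : ℕ} (hi : i < 4 ^ k) (hj : j < 4 ^ k) (hij : vdc T i ∈ triSet (cell k T j)) :
      i = j :=
    eq_of_vdc_mem_triSet_cell hT hi hj hij
  rw [level_eq_image_cell, ← image_comp]
  refine ⟨?_, ?_⟩
  · rw [← hvdc.image_eq]
    exact InjOn.bijOn_image fun i hi j hj hij => hunique hi hj (hij ▸ hmem hj)
  · rintro _ ⟨j, hj, rfl⟩
    refine ⟨⟨j, ⟨hj, hmem hj⟩, fun i ⟨hi, hij⟩ => hunique hi hj hij⟩, fun i hi hij => ?_⟩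
    rw [hunique hi hj hij, hvdc hj]
    rfl
end

section
/- Let Ω = Δ(A,B,C) be a nondegenerate triangle in ℝ², k ≥ 1 an integer, N = 4^k, and consider the standard level-k subdivision of Ω into N congruent subtriangles. For any 0 < a,b ≤ 1, the number of subtriangles of the subdivision whose interior is intersected by the topological boundary of the parallelogram 𝒯_{a,b,C} is at most 2√N − 1. -/
open MeasureTheory Filter Real

/-!
The affine chart `(s, t) ↦ C + s • (A - C) + t • (B - C)` identifies `Ω` with the unit triangle
`s, t ≥ 0, s + t ≤ 1`, the level-`k` subdivision with the triangles cut out of it by the lines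
`s, t, s + t ∈ (1/n)ℤ` for `n = 2^k`, and `𝒯_{a,b,C}` with the box `[0, a) × [0, b)`. The
interior of a cell can only meet the frontier of the box if the cell meets both the box and its
complement; then its grid square lies in the column of the edge `s = a` below that edge, or in
the row of `t = b` to the left of it. Inside the triangle such a hook holds at most
`2n - 1 = 2√N - 1` cells.
-/

lemma inter_nonempty_and_sdiff_nonempty_of_interior_inter_frontier {X : Type*}
    [TopologicalSpace X] {U S : Set X} (h : (interior U ∩ frontier S).Nonempty) :
    (U ∩ S).Nonempty ∧ (U \ S).Nonempty := by
  obtain ⟨x, hxU, hxS⟩ := h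
  rw [frontier_eq_closure_inter_closure] at hxS
  have hin := mem_closure_iff.1 hxS.1 _ isOpen_interior hxU
  have hout := mem_closure_iff.1 hxS.2 _ isOpen_interior hxU
  exact ⟨hin.mono (Set.inter_subset_inter_left _ interior_subset),
    hout.mono (Set.inter_subset_inter_left _ interior_subset)⟩

section Ceil

variable {α : Type*} [Semiring α] [LinearOrder α] [FloorSemiring α] {x : α} {i : ℕ}

lemma Nat.eq_ceil_sub_one_of_lt_of_le (h₁ : i < x) (h₂ : x ≤ i + 1) : i = ⌈x⌉₊ - 1 := by
  have : ⌈x⌉₊ = i + 1 := (Nat.ceil_eq_iff i.succ_ne_zero).2 (by simpa using ⟨h₁, h₂⟩)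
  omega

lemma Nat.le_ceil_sub_one_of_lt (h : i < x) : i ≤ ⌈x⌉₊ - 1 := by
  have := Nat.lt_ceil.2 h
  omega

end Ceil

noncomputable section

namespace TriGrid

def affCoord (A B C : Pt) : Pt →ᵃ[ℝ] Pt :=
  ((LinearMap.fst ℝ ℝ ℝ).smulRight (A - C) + (LinearMap.snd ℝ ℝ ℝ).smulRight (B - C)).toAffineMap
    + AffineMap.const ℝ Pt C

lemma affCoord_apply (A B C w : Pt) : affCoord A B C w = C + w.1 • (A - C) + w.2 • (B - C) := by
  simp only [affCoord, AffineMap.coe_add, LinearMap.coe_toAffineMap, AffineMap.coe_const,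
    Pi.add_apply, LinearMap.add_apply, LinearMap.coe_smulRight, LinearMap.fst_apply,
    LinearMap.snd_apply, Function.const_apply]
  abel

lemma affCoord_injective {A B C : Pt} (h : Nondeg A B C) : Function.Injective (affCoord A B C) := by
  let weights (w : Pt) : Fin 3 → ℝ := ![w.1, w.2, 1 - w.1 - w.2]
  have hsum (w : Pt) : ∑ i, weights w i = 1 := by simp [weights, Fin.sum_univ_three]
  have hcomb (w : Pt) :
      affCoord A B C w = Finset.univ.affineCombination ℝ ![A, B, C] (weights w) := by
    rw [Finset.affineCombination_eq_linear_combination _ _ _ (hsum w), Fin.sum_univ_three,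
      affCoord_apply]
    simp only [weights, Fin.isValue, Matrix.cons_val_zero, Matrix.cons_val_one, Matrix.cons_val]
    module
  have hind := (affineIndependent_iff_eq_of_fintype_affineCombination_eq ℝ ![A, B, C]).1
    (affineIndependent_iff_not_collinear_set.2 h)
  intro w w' hww'
  have hweq := hind _ _ (hsum w) (hsum w') (by rw [← hcomb, ← hcomb, hww'])
  exact Prod.ext (congrFun hweq 0) (congrFun hweq 1)

lemma parlg_eq_image (A B C : Pt) (a b : ℝ) :
    parlg A B C a b = affCoord A B C '' (Set.Ico 0 a ×ˢ Set.Ico 0 b) := by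
  ext x
  simp only [parlg, Set.mem_ofPred_eq, Set.mem_image, Set.mem_prod, Set.mem_Ico, Prod.exists,
    affCoord_apply]
  constructor
  · rintro ⟨s, t, hs, hs', ht, ht', rfl⟩
    exact ⟨s, t, ⟨⟨hs, hs'⟩, ht, ht'⟩, rfl⟩
  · rintro ⟨s, t, ⟨⟨hs, hs'⟩, ht, ht'⟩, rfl⟩
    exact ⟨s, t, hs, hs', ht, ht', rfl⟩

def mapTri (f : Pt → Pt) (T : Tri2) : Tri2 := (f T.1, f T.2.1, f T.2.2)

lemma mid_map (f : Pt →ᵃ[ℝ] Pt) (P Q : Pt) : mid (f P) (f Q) = f (mid P Q) := by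
  simpa only [mid, midpoint_eq_smul_add, invOf_eq_inv] using (f.map_midpoint P Q).symm

lemma subdiv_mapTri (f : Pt →ᵃ[ℝ] Pt) (T : Tri2) (d : ℕ) :
    subdiv (mapTri f T) d = mapTri f (subdiv T d) := by
  unfold subdiv
  split_ifs <;> simp [mapTri, mid_map]

lemma triSet_mapTri (f : Pt →ᵃ[ℝ] Pt) (T : Tri2) : triSet (mapTri f T) = f '' triSet T := by
  simp [triSet, triangle, mapTri, f.image_convexHull, Set.image_insert_eq]

def gridPt (n x y : ℕ) : Pt := ((x : ℝ) / n, (y : ℝ) / n)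

/-- `(i, j, true)` is the upward cell with right-angle corner `(i, j)/n`, `(i, j, false)` the
downward one with corner `(i + 1, j + 1)/n`; vertices follow the orientation of `(A, B, C)`. -/
def gridTri (n : ℕ) : ℕ × ℕ × Bool → Tri2
  | (i, j, true) => (gridPt n (i + 1) j, gridPt n i (j + 1), gridPt n i j)
  | (i, j, false) => (gridPt n i (j + 1), gridPt n (i + 1) j, gridPt n (i + 1) (j + 1))

def gridCells (n : ℕ) : Finset (ℕ × ℕ × Bool) :=
  (Finset.range n ×ˢ Finset.range n ×ˢ Finset.univ).filter
    fun c => c.1 + c.2.1 + (if c.2.2 then 1 else 2) ≤ n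

lemma mem_gridCells {n i j : ℕ} {up : Bool} :
    (i, j, up) ∈ gridCells n ↔ i + j + (if up then 1 else 2) ≤ n := by
  simp only [gridCells, Finset.mem_filter, Finset.mem_product, Finset.mem_range,
    Finset.mem_univ, and_true, and_iff_right_iff_imp]
  split_ifs <;> omega

def childCell : ℕ × ℕ × Bool → ℕ → ℕ × ℕ × Bool
  | (i, j, true), 0 => (2 * i, 2 * j, false)
  | (i, j, true), 1 => (2 * i + 1, 2 * j, true)
  | (i, j, true), 2 => (2 * i, 2 * j + 1, true)
  | (i, j, true), _ => (2 * i, 2 * j, true)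
  | (i, j, false), 0 => (2 * i + 1, 2 * j + 1, true)
  | (i, j, false), 1 => (2 * i, 2 * j + 1, false)
  | (i, j, false), 2 => (2 * i + 1, 2 * j, false)
  | (i, j, false), _ => (2 * i + 1, 2 * j + 1, false)

lemma childCell_mem_gridCells {n : ℕ} {c : ℕ × ℕ × Bool} (hc : c ∈ gridCells n) (d : ℕ) :
    childCell c d ∈ gridCells (2 * n) := by
  obtain ⟨i, j, _ | _⟩ := c <;> rcases d with _ | _ | _ | d <;>
    simp only [childCell, mem_gridCells, Bool.false_eq_true, ↓reduceIte] at hc ⊢ <;> omega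

lemma subdiv_gridTri {n : ℕ} (hn : n ≠ 0) (c : ℕ × ℕ × Bool) (d : ℕ) :
    subdiv (gridTri n c) d = gridTri (2 * n) (childCell c d) := by
  obtain ⟨i, j, _ | _⟩ := c <;> rcases d with _ | _ | _ | d <;>
    simp only [subdiv, childCell, gridTri, mid, gridPt, Nat.reduceEqDiff, ↓reduceIte] <;>
    ext <;>
    simp only [Nat.cast_add, Nat.cast_one, Nat.cast_mul, Nat.cast_ofNat, Prod.mk_add_mk,
      Prod.smul_mk, smul_eq_mul] <;>
    field_simp <;> ring

lemma exists_gridCell_of_mem_level {A B C : Pt} {k : ℕ} {S : Tri2}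
    (hS : S ∈ level (A, B, C) k) :
    ∃ c ∈ gridCells (2 ^ k), S = mapTri (affCoord A B C) (gridTri (2 ^ k) c) := by
  induction k generalizing S with
  | zero =>
    refine ⟨(0, 0, true), by simp [mem_gridCells], ?_⟩
    rw [hS]
    ext <;> simp [mapTri, gridTri, gridPt, affCoord_apply]
  | succ k ih =>
    obtain ⟨S', hS', d, -, rfl⟩ := hS
    obtain ⟨c, hc, rfl⟩ := ih hS'
    rw [pow_succ']
    exact ⟨childCell c d, childCell_mem_gridCells hc d,
      by rw [subdiv_mapTri, subdiv_gridTri (by positivity)]⟩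

def gridSquare (n i j : ℕ) : Set Pt :=
  Set.Icc ((i : ℝ) / n) ((i + 1) / n) ×ˢ Set.Icc ((j : ℝ) / n) ((j + 1) / n)

lemma triSet_gridTri_subset (n : ℕ) (c : ℕ × ℕ × Bool) :
    triSet (gridTri n c) ⊆ gridSquare n c.1 c.2.1 := by
  have hstep (m : ℕ) : (m : ℝ) / n ≤ (m + 1) / n := by gcongr; linarith
  refine convexHull_min ?_ ((convex_Icc _ _).prod (convex_Icc _ _))
  obtain ⟨i, j, _ | _⟩ := c <;> simp [gridTri, gridSquare, gridPt, Set.insert_subset_iff, hstep]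

/-- `⌈a n⌉₊ - 1` and `⌈b n⌉₊ - 1` index the column and the row of the grid that contain the
far edges `s = a` and `t = b` of the box. -/
lemma hook_of_gridSquare_meets_box {n : ℕ} (hn : 0 < n) {i j : ℕ} {a b : ℝ}
    (hin : (gridSquare n i j ∩ Set.Ico 0 a ×ˢ Set.Ico 0 b).Nonempty)
    (hout : (gridSquare n i j \ Set.Ico 0 a ×ˢ Set.Ico 0 b).Nonempty) :
    (i = ⌈a * n⌉₊ - 1 ∧ j ≤ ⌈b * n⌉₊ - 1) ∨ (j = ⌈b * n⌉₊ - 1 ∧ i ≤ ⌈a * n⌉₊ - 1) := by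
  have hn' : (0 : ℝ) < n := by exact_mod_cast hn
  obtain ⟨x, ⟨⟨hx₁, -⟩, hx₂, -⟩, ⟨-, hxa⟩, -, hxb⟩ := hin
  obtain ⟨y, ⟨⟨hy₁, hy₁'⟩, hy₂, hy₂'⟩, hyout⟩ := hout
  rw [div_le_iff₀ hn'] at hx₁ hx₂ hy₁ hy₂
  rw [le_div_iff₀ hn'] at hy₁' hy₂'
  have hia : (i : ℝ) < a * n := by nlinarith
  have hjb : (j : ℝ) < b * n := by nlinarith
  have hedge : a ≤ y.1 ∨ b ≤ y.2 := by
    by_contra! hlt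
    exact hyout ⟨⟨by nlinarith, hlt.1⟩, by nlinarith, hlt.2⟩
  rcases hedge with h | h
  · exact .inl ⟨Nat.eq_ceil_sub_one_of_lt_of_le hia (by nlinarith), Nat.le_ceil_sub_one_of_lt hjb⟩
  · exact .inr ⟨Nat.eq_ceil_sub_one_of_lt_of_le hjb (by nlinarith), Nat.le_ceil_sub_one_of_lt hia⟩

def hookCells (n p q : ℕ) : Finset (ℕ × ℕ × Bool) :=
  (gridCells n).filter fun c => (c.1 = p ∧ c.2.1 ≤ q) ∨ (c.2.1 = q ∧ c.1 ≤ p)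

lemma card_hookCells_le (n p q : ℕ) : (hookCells n p q).card ≤ 2 * n - 1 := by
  -- Cells of the column `i = p` get the numbers `2j`, `2j + 1` counting up from `0`, those of
  -- the row `j = q` the numbers `2n - 2 - 2i`, `2n - 3 - 2i` counting down from `2n - 2`; the
  -- constraint `i + j + 1 ≤ n` keeps the two ranges apart.
  let number (c : ℕ × ℕ × Bool) : ℕ :=
    if c.1 = p then 2 * c.2.1 + (if c.2.2 then 0 else 1)
    else 2 * n - 2 - 2 * c.1 - (if c.2.2 then 0 else 1)
  calc (hookCells n p q).card ≤ (Finset.range (2 * n - 1)).card := by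
        refine Finset.card_le_card_of_injOn number ?_ ?_
        · rintro ⟨i, j, _ | _⟩ hc <;>
            simp only [hookCells, Finset.mem_coe, Finset.mem_filter, mem_gridCells,
              Bool.false_eq_true, ↓reduceIte, number, Finset.coe_range, Set.mem_Iio] at hc ⊢ <;>
            split_ifs <;> omega
        · rintro ⟨i, j, _ | _⟩ hc ⟨i', j', _ | _⟩ hc' h <;>
            simp only [hookCells, Finset.mem_coe, Finset.mem_filter, mem_gridCells,
              Bool.false_eq_true, Bool.true_eq_false, ↓reduceIte, number, Prod.mk.injEq, and_true,
              and_false] at hc hc' h ⊢ <;>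
            split_ifs at h <;> omega
    _ = 2 * n - 1 := Finset.card_range _

lemma mem_hookCells_of_touches {A B C : Pt} (h : Nondeg A B C) {n : ℕ} (hn : 0 < n)
    {c : ℕ × ℕ × Bool} (hc : c ∈ gridCells n) {a b : ℝ}
    (ht : (interior (triSet (mapTri (affCoord A B C) (gridTri n c)))
      ∩ frontier (parlg A B C a b)).Nonempty) :
    c ∈ hookCells n (⌈a * n⌉₊ - 1) (⌈b * n⌉₊ - 1) := by
  rw [triSet_mapTri, parlg_eq_image] at ht
  obtain ⟨hin, hout⟩ := inter_nonempty_and_sdiff_nonempty_of_interior_inter_frontier ht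
  rw [← Set.image_inter (affCoord_injective h)] at hin
  rw [← Set.image_sdiff (affCoord_injective h)] at hout
  have hsq := triSet_gridTri_subset n c
  exact Finset.mem_filter.2 ⟨hc, hook_of_gridSquare_meets_box hn
    (hin.of_image.mono (Set.inter_subset_inter_left _ hsq))
    (hout.of_image.mono (Set.sdiff_subset_sdiff_left hsq))⟩

lemma touching_subset_image_hookCells {A B C : Pt} (h : Nondeg A B C) (k : ℕ) (a b : ℝ) :
    {S : Tri2 | S ∈ level (A, B, C) k ∧
        (interior (triSet S) ∩ frontier (parlg A B C a b)).Nonempty}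
      ⊆ ((hookCells (2 ^ k) (⌈a * 2 ^ k⌉₊ - 1) (⌈b * 2 ^ k⌉₊ - 1)).image
          (mapTri (affCoord A B C) ∘ gridTri (2 ^ k)) : Set Tri2) := by
  rintro S ⟨hS, ht⟩
  obtain ⟨c, hc, rfl⟩ := exists_gridCell_of_mem_level hS
  have := mem_hookCells_of_touches h (by positivity) hc ht
  push_cast at this
  exact Finset.mem_image_of_mem _ this

end TriGrid

end

open TriGrid

theorem boundary_touches_card_le_general (A B C : Pt) (h : Nondeg A B C) (k : ℕ)
    (a b : ℝ) :
    (Nat.card {S : Tri2 | S ∈ level (A, B, C) k ∧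
        (interior (triSet S) ∩ frontier (parlg A B C a b)).Nonempty} : ℝ)
      ≤ 2 * Real.sqrt ((4 : ℝ) ^ k) - 1 := by
  have hcard := (Nat.card_mono (Finset.finite_toSet _) (touching_subset_image_hookCells h k a b)).trans
    ((Nat.card_eq_finsetCard _).trans_le (Finset.card_image_le.trans (card_hookCells_le _ _ _)))
  have hsqrt : √((4 : ℝ) ^ k) = 2 ^ k := by
    rw [show (4 : ℝ) = 2 ^ 2 by norm_num, ← pow_mul, mul_comm, pow_mul,
      Real.sqrt_sq (by positivity)]
  have hpos : 1 ≤ 2 * 2 ^ k := Nat.one_le_two_pow.trans (Nat.le_mul_of_pos_left _ two_pos)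
  rw [hsqrt]
  calc _ ≤ ((2 * 2 ^ k - 1 : ℕ) : ℝ) := by exact_mod_cast hcard
    _ = 2 * 2 ^ k - 1 := by push_cast [Nat.cast_sub hpos]; ring

/-- for `N = 4^k`, `k ≥ 1`, the boundary of any anchored parallelogram
`𝒯_{a,b,C}` intersects the interiors of at most `2√N - 1` of the `N` subtriangles of
the standard level-`k` subdivision of `Ω = Δ(A,B,C)`. -/
theorem boundary_touches_card_le (A B C : Pt) (h : Nondeg A B C) (k : ℕ) (hk : 1 ≤ k)
    (a b : ℝ) (ha : 0 < a) (ha' : a ≤ 1) (hb : 0 < b) (hb' : b ≤ 1) :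
    (Nat.card {S : Tri2 | S ∈ level (A, B, C) k ∧
        (interior (triSet S) ∩ frontier (parlg A B C a b)).Nonempty} : ℝ)
      ≤ 2 * Real.sqrt ((4 : ℝ) ^ k) - 1 :=
  boundary_touches_card_le_general A B C h k a b
end

section
/- Let T ⊂ ℝ² be a nondegenerate closed triangle and f : T → ℝ a bounded function that is continuous at Lebesgue-almost every point of T. Then f is Riemann integrable on T in the triangular-subdivision sense. -/
open MeasureTheory Filter Real

open MeasureTheory Filter Topology Finset

/-! The level-`k` Riemann sum is, up to the factor `area T`, the integral over `T` of the step
function equal to `f (x k i)` on the `i`-th subtriangle (made disjoint from the earlier ones).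
Every subtriangle is a homothetic copy of `T` with ratio `±1/2` per level, so it has area
`4⁻ᵏ · area T` and diameter `2⁻ᵏ · diam T`. Hence the step functions converge to `f` at every
point where `f` is continuous, i.e. almost everywhere, and they are bounded by the bound of `f`;
by dominated convergence the Riemann sums tend to `(area T)⁻¹ ∫_T f`. -/

lemma biUnion_range_disjointed {α : Type*} (f : ℕ → Set α) (n : ℕ) :
    ⋃ i ∈ range n, disjointed f i = ⋃ i ∈ range n, f i := by
  cases n with
  | zero => simp
  | succ n => rw [biUnion_range_succ_disjointed, partialSups_eq_biUnion_range]

lemma measureReal_disjointed_eq {α : Type*} [MeasurableSpace α] {μ : Measure α}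
    {f : ℕ → Set α} {n : ℕ} {c : ℝ} (hf : ∀ i, MeasurableSet (f i)) (hfin : ∀ i, μ (f i) ≠ ⊤)
    (hc : ∀ i < n, μ.real (f i) = c) (hunion : μ.real (⋃ i ∈ range n, f i) = n * c)
    {i : ℕ} (hi : i < n) : μ.real (disjointed f i) = c := by
  have hle : ∀ j ∈ range n, μ.real (disjointed f j) ≤ c := fun j hj =>
    hc j (mem_range.1 hj) ▸ measureReal_mono (disjointed_subset f j) (hfin j)
  have hsum : ∑ j ∈ range n, μ.real (disjointed f j) = ∑ j ∈ range n, c := by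
    rw [← measureReal_biUnion_finset ((disjoint_disjointed f).set_pairwise _)
        (fun j _ => MeasurableSet.disjointed hf j)
        (fun j _ => measure_ne_top_of_subset (disjointed_subset f j) (hfin j)),
      biUnion_range_disjointed, hunion, sum_const, card_range, nsmul_eq_mul]
  exact (sum_eq_sum_iff_of_le hle).1 hsum i (mem_range.2 hi)

lemma sum_indicator_const_eq_of_mem {α ι M : Type*} [AddCommMonoid M] {s : Finset ι}
    {C : ι → Set α} (hC : (s : Set ι).PairwiseDisjoint C) (v : ι → M) {i : ι} (hi : i ∈ s)
    {y : α} (hy : y ∈ C i) :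
    ∑ j ∈ s, (C j).indicator (fun _ => v j) y = v i := by
  rw [sum_eq_single_of_mem i hi fun j hj hji =>
    Set.indicator_of_notMem (Set.disjoint_left.1 (hC hi hj hji.symm) hy) _, Set.indicator_of_mem hy]

lemma setIntegral_sum_indicator_const {X ι : Type*} [MeasurableSpace X] {μ : Measure X}
    {Ω : Set X} [IsFiniteMeasure (μ.restrict Ω)] {s : Finset ι} {C : ι → Set X}
    (hC : ∀ i, MeasurableSet (C i)) (hCΩ : ∀ i ∈ s, C i ⊆ Ω) (v : ι → ℝ) :
    ∫ y in Ω, ∑ i ∈ s, (C i).indicator (fun _ => v i) y ∂μ = ∑ i ∈ s, μ.real (C i) * v i := by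
  rw [integral_finsetSum _ fun i _ => (integrable_const _).indicator (hC i)]
  refine sum_congr rfl fun i hi => ?_
  rw [integral_indicator_const _ (hC i), measureReal_restrict_apply (hC i),
    Set.inter_eq_left.2 (hCΩ i hi), smul_eq_mul]

theorem tendsto_sum_measureReal_mul_of_ae_continuousWithinAt {X ι : Type*} [PseudoMetricSpace X]
    [MeasurableSpace X] {μ : Measure X} {Ω : Set X} {f : X → ℝ} {s : ℕ → Finset ι}
    {C : ℕ → ι → Set X} {x : ℕ → ι → X} (hΩ : μ Ω ≠ ⊤) {M : ℝ}
    (hfM : ∀ y ∈ Ω, |f y| ≤ M) (hf : ∀ᵐ y ∂μ.restrict Ω, ContinuousWithinAt f Ω y)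
    (hC : ∀ k i, MeasurableSet (C k i)) (hCdisj : ∀ k, (s k : Set ι).PairwiseDisjoint (C k))
    (hCΩ : ∀ k, ⋃ i ∈ s k, C k i = Ω) (hx : ∀ k, ∀ i ∈ s k, x k i ∈ Ω) {δ : ℕ → ℝ}
    (hδ : Tendsto δ atTop (𝓝 0)) (hxC : ∀ k, ∀ i ∈ s k, ∀ y ∈ C k i, dist (x k i) y ≤ δ k) :
    Tendsto (fun k => ∑ i ∈ s k, μ.real (C k i) * f (x k i)) atTop (𝓝 (∫ y in Ω, f y ∂μ)) := by
  have : IsFiniteMeasure (μ.restrict Ω) := isFiniteMeasure_restrict.2 hΩ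
  have hΩmeas : MeasurableSet Ω := hCΩ 0 ▸ measurableSet_biUnion _ fun i _ => hC 0 i
  have hmem : ∀ k, ∀ y ∈ Ω, ∃ i ∈ s k, y ∈ C k i := fun k y hy => by
    simpa only [← hCΩ k, Set.mem_iUnion₂, exists_prop] using hy
  set F : ℕ → X → ℝ := fun k y => ∑ i ∈ s k, (C k i).indicator (fun _ => f (x k i)) y
  have hF : ∀ k, ∀ i ∈ s k, ∀ y ∈ C k i, F k y = f (x k i) := fun k _ hi _ hy =>
    sum_indicator_const_eq_of_mem (hCdisj k) _ hi hy
  have hFbound : ∀ k, ∀ᵐ y ∂μ.restrict Ω, ‖F k y‖ ≤ M := by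
    intro k
    filter_upwards [ae_restrict_mem hΩmeas] with y hy
    obtain ⟨i, hi, hyC⟩ := hmem k y hy
    rw [hF k i hi y hyC, Real.norm_eq_abs]
    exact hfM _ (hx k i hi)
  have hFlim : ∀ᵐ y ∂μ.restrict Ω, Tendsto (F · y) atTop (𝓝 (f y)) := by
    filter_upwards [hf, ae_restrict_mem hΩmeas] with y hfy hy
    choose i hi hyC using fun k => hmem k y hy
    have hxy : Tendsto (fun k => x k (i k)) atTop (𝓝[Ω] y) :=
      tendsto_nhdsWithin_iff.2 ⟨tendsto_iff_dist_tendsto_zero.2 <| squeeze_zero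
        (fun _ => dist_nonneg) (fun k => hxC k _ (hi k) y (hyC k)) hδ,
        Eventually.of_forall fun k => hx k _ (hi k)⟩
    exact (hfy.tendsto.comp hxy).congr fun k => (hF k _ (hi k) y (hyC k)).symm
  refine (tendsto_integral_of_dominated_convergence (fun _ => M)
    (fun k => (Finset.measurable_sum _ fun i _ =>
      measurable_const.indicator (hC k i)).aestronglyMeasurable)
    (integrable_const M) hFbound hFlim).congr fun k => ?_
  exact setIntegral_sum_indicator_const (hC k)
    (fun i hi => hCΩ k ▸ Set.subset_biUnion_of_mem (u := C k) hi) _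

lemma mem_triangle_iff {A B C x : Pt} :
    x ∈ triangle A B C ↔ ∃ a b c : ℝ, 0 ≤ a ∧ 0 ≤ b ∧ 0 ≤ c ∧ a + b + c = 1 ∧
      x = a • A + b • B + c • C := by
  constructor
  · rw [triangle, ← convexJoin_singleton_segment, mem_convexJoin]
    rintro ⟨_, rfl, _, ⟨u, v, hu, hv, huv, rfl⟩, s, t, hs, ht, hst, rfl⟩
    exact ⟨s, t * u, t * v, hs, by positivity, by positivity,
      by linear_combination t * huv + hst, by module⟩
  · rintro ⟨a, b, c, ha, hb, hc, habc, rfl⟩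
    refine mem_convexHull_of_exists_fintype ![a, b, c] ![A, B, C] ?_ ?_ ?_ ?_
    · intro i; fin_cases i <;> assumption
    · simpa [Fin.sum_univ_three] using habc
    · intro i; fin_cases i <;> simp
    · simp [Fin.sum_univ_three]

lemma isCompact_triSet (S : Tri2) : IsCompact (triSet S) :=
  (Set.toFinite _).isCompact_convexHull ℝ

lemma measurableSet_triSet (S : Tri2) : MeasurableSet (triSet S) :=
  (isCompact_triSet S).isClosed.measurableSet

lemma volume_triangle_pos {A B C : Pt} (h : Nondeg A B C) : 0 < volume (triangle A B C) := by
  have hspan : affineSpan ℝ ({A, B, C} : Set Pt) = ⊤ := by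
    have hind : AffineIndependent ℝ ![A, B, C] := affineIndependent_iff_not_collinear_set.2 h
    rw [← hind.affineSpan_eq_top_iff_card_eq_finrank_add_one.2 (by simp)]
    congr 1
    ext
    simp [or_comm, or_left_comm]
  refine Measure.measure_pos_of_nonempty_interior _ ?_
  rwa [triangle, (convex_convexHull ℝ _).interior_nonempty_iff_affineSpan_eq_top,
    affineSpan_convexHull]

lemma image_homothety_triangle (c : Pt) (r : ℝ) (A B C : Pt) :
    AffineMap.homothety c r '' triangle A B C =
      triangle (AffineMap.homothety c r A) (AffineMap.homothety c r B)
        (AffineMap.homothety c r C) := by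
  simp [triangle, AffineMap.image_convexHull, Set.image_insert_eq]

lemma dist_homothety_homothety {E : Type*} [SeminormedAddCommGroup E] [NormedSpace ℝ E]
    (c : E) (r : ℝ) (y z : E) :
    dist (AffineMap.homothety c r y) (AffineMap.homothety c r z) = |r| * dist y z := by
  simp [AffineMap.homothety_apply, dist_eq_norm, ← smul_sub, norm_smul]

lemma mid_mem_triangle {A B C P Q : Pt} (hP : P ∈ triangle A B C) (hQ : Q ∈ triangle A B C) :
    mid P Q ∈ triangle A B C := by
  rw [mid, smul_add]
  exact convex_convexHull ℝ _ hP hQ (by norm_num) (by norm_num) (by norm_num)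

lemma triSet_subdiv_eq_image_homothety (S : Tri2) (d : ℕ) :
    ∃ c : Pt, ∃ r : ℝ, |r| = 2⁻¹ ∧ triSet (subdiv S d) = AffineMap.homothety c r '' triSet S := by
  obtain ⟨A, B, C⟩ := S
  simp only [subdiv, triSet, image_homothety_triangle]
  split_ifs
  on_goal 1 => refine ⟨(3⁻¹ : ℝ) • (A + B + C), -2⁻¹, by norm_num, ?_⟩
  on_goal 2 => refine ⟨A, 2⁻¹, by norm_num, ?_⟩
  on_goal 3 => refine ⟨B, 2⁻¹, by norm_num, ?_⟩
  on_goal 4 => refine ⟨C, 2⁻¹, by norm_num, ?_⟩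
  all_goals congr 1 <;> simp only [AffineMap.homothety_apply, mid, vsub_eq_sub, vadd_eq_add] <;>
    module

lemma volume_triSet_subdiv (S : Tri2) (d : ℕ) :
    volume (triSet (subdiv S d)) = 4⁻¹ * volume (triSet S) := by
  obtain ⟨c, r, hr, hS⟩ := triSet_subdiv_eq_image_homothety S d
  rw [hS, Measure.addHaar_image_homothety, abs_pow, hr, Module.finrank_prod, Module.finrank_self,
    inv_pow, ENNReal.ofReal_inv_of_pos (by norm_num)]
  norm_num

lemma diam_triSet_subdiv_le (S : Tri2) (d : ℕ) :
    Metric.diam (triSet (subdiv S d)) ≤ 2⁻¹ * Metric.diam (triSet S) := by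
  obtain ⟨c, r, hr, hS⟩ := triSet_subdiv_eq_image_homothety S d
  rw [hS]
  refine Metric.diam_le_of_forall_dist_le (by positivity) ?_
  rintro _ ⟨y, hy, rfl⟩ _ ⟨z, hz, rfl⟩
  rw [dist_homothety_homothety, hr]
  gcongr
  exact Metric.dist_le_diam_of_mem (isCompact_triSet _).isBounded hy hz

lemma triSet_subdiv_subset (S : Tri2) (d : ℕ) : triSet (subdiv S d) ⊆ triSet S := by
  obtain ⟨A, B, C⟩ := S
  have hA : A ∈ triangle A B C := subset_convexHull ℝ _ (by simp)
  have hB : B ∈ triangle A B C := subset_convexHull ℝ _ (by simp)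
  have hC : C ∈ triangle A B C := subset_convexHull ℝ _ (by simp)
  simp only [subdiv, triSet]
  split_ifs <;> refine convexHull_min ?_ (convex_convexHull ℝ _) <;>
    simp [Set.insert_subset_iff, hA, hB, hC, mid_mem_triangle]

lemma exists_mem_triSet_subdiv {S : Tri2} {y : Pt} (hy : y ∈ triSet S) :
    ∃ d < 4, y ∈ triSet (subdiv S d) := by
  obtain ⟨A, B, C⟩ := S
  obtain ⟨a, b, c, ha, hb, hc, habc, rfl⟩ := mem_triangle_iff.1 hy
  -- a barycentric coordinate `≥ 1/2` puts `y` in the corner subtriangle at that vertex;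
  -- if there is none, `y` lies in the middle subtriangle
  have hc' : c = 1 - a - b := by linarith
  subst hc'
  obtain ha2 | hb2 | hc2 | hsmall : 2⁻¹ ≤ a ∨ 2⁻¹ ≤ b ∨ 2⁻¹ ≤ 1 - a - b ∨
      (a ≤ 2⁻¹ ∧ b ≤ 2⁻¹ ∧ 1 - a - b ≤ 2⁻¹) := by
    by_contra! h
    linarith [h.2.2.2 h.1.le h.2.1.le, h.2.2.1]
  · exact ⟨1, by norm_num, mem_triangle_iff.2 ⟨2 * a - 1, 2 * b, 2 * (1 - a - b),
      by linarith, by linarith, by linarith, by ring, by simp only [subdiv, mid]; norm_num; module⟩⟩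
  · exact ⟨2, by norm_num, mem_triangle_iff.2 ⟨2 * a, 2 * b - 1, 2 * (1 - a - b),
      by linarith, by linarith, by linarith, by ring, by simp only [subdiv, mid]; norm_num; module⟩⟩
  · exact ⟨3, by norm_num, mem_triangle_iff.2 ⟨2 * a, 2 * b, 2 * (1 - a - b) - 1,
      by linarith, by linarith, by linarith, by ring, by simp only [subdiv, mid]; norm_num; module⟩⟩
  · exact ⟨0, by norm_num, mem_triangle_iff.2 ⟨1 - 2 * a, 1 - 2 * b, 1 - 2 * (1 - a - b),
      by linarith, by linarith, by linarith, by ring, by simp only [subdiv, mid]; norm_num; module⟩⟩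

lemma triSet_subdivAt_subset (T : Tri2) (k i : ℕ) : triSet (subdivAt T k i) ⊆ triSet T := by
  induction k generalizing i with
  | zero => exact subset_rfl
  | succ k ih => exact (triSet_subdiv_subset _ _).trans (ih _)

lemma volume_triSet_subdivAt (T : Tri2) (k i : ℕ) :
    volume (triSet (subdivAt T k i)) = 4⁻¹ ^ k * volume (triSet T) := by
  induction k generalizing i with
  | zero => simp [subdivAt]
  | succ k ih => rw [subdivAt, volume_triSet_subdiv, ih, pow_succ', mul_assoc]

lemma diam_triSet_subdivAt_le (T : Tri2) (k i : ℕ) :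
    Metric.diam (triSet (subdivAt T k i)) ≤ 2⁻¹ ^ k * Metric.diam (triSet T) := by
  induction k generalizing i with
  | zero => simp [subdivAt]
  | succ k ih =>
    calc Metric.diam (triSet (subdivAt T (k + 1) i))
        ≤ 2⁻¹ * Metric.diam (triSet (subdivAt T k (i / 4))) := diam_triSet_subdiv_le _ _
      _ ≤ 2⁻¹ * (2⁻¹ ^ k * Metric.diam (triSet T)) := by gcongr; exact ih _
      _ = 2⁻¹ ^ (k + 1) * Metric.diam (triSet T) := by ring

lemma exists_mem_triSet_subdivAt (T : Tri2) (k : ℕ) {y : Pt} (hy : y ∈ triSet T) :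
    ∃ i < 4 ^ k, y ∈ triSet (subdivAt T k i) := by
  induction k with
  | zero => exact ⟨0, by norm_num, hy⟩
  | succ k ih =>
    obtain ⟨j, hj, hyj⟩ := ih
    obtain ⟨d, hd, hyd⟩ := exists_mem_triSet_subdiv hyj
    refine ⟨4 * j + d, by rw [pow_succ]; omega, ?_⟩
    rwa [subdivAt, show (4 * j + d) / 4 = j by omega, show (4 * j + d) % 4 = d by omega]

lemma biUnion_triSet_subdivAt (T : Tri2) (k : ℕ) :
    ⋃ i ∈ range (4 ^ k), triSet (subdivAt T k i) = triSet T := by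
  refine Set.Subset.antisymm (Set.iUnion₂_subset fun i _ => triSet_subdivAt_subset T k i) ?_
  intro y hy
  obtain ⟨i, hi, hyi⟩ := exists_mem_triSet_subdivAt T k hy
  exact Set.mem_biUnion (mem_range.2 hi) hyi

lemma measureReal_disjointed_triSet_subdivAt (T : Tri2) {k i : ℕ} (hi : i < 4 ^ k) :
    volume.real (disjointed (fun j => triSet (subdivAt T k j)) i) =
      volume.real (triSet T) / 4 ^ k := by
  refine measureReal_disjointed_eq (fun j => measurableSet_triSet _)
    (fun j => (isCompact_triSet _).measure_lt_top.ne) (fun j _ => ?_) ?_ hi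
  · simp [measureReal_def, volume_triSet_subdivAt, div_eq_inv_mul]
  · rw [biUnion_triSet_subdivAt]
    push_cast
    field_simp

lemma dist_le_of_mem_triSet_subdivAt {T : Tri2} {k i : ℕ} {y z : Pt}
    (hy : y ∈ triSet (subdivAt T k i)) (hz : z ∈ triSet (subdivAt T k i)) :
    dist y z ≤ 2⁻¹ ^ k * Metric.diam (triSet T) :=
  (Metric.dist_le_diam_of_mem (isCompact_triSet _).isBounded hy hz).trans
    (diam_triSet_subdivAt_le T k i)

/-- a bounded function on a nondegenerate closed triangle that is
continuous at Lebesgue-almost every point of the triangle is Riemann integrable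
in the triangular-subdivision sense. -/
theorem riemann_of_ae_continuous (T : Tri2) (h : Nondeg T.1 T.2.1 T.2.2)
    (f : Pt → ℝ) (Mb : ℝ) (hb : ∀ x ∈ triSet T, |f x| ≤ Mb)
    (hcont : ∀ᵐ x ∂(volume.restrict (triSet T)), ContinuousWithinAt f (triSet T) x) :
    ∃ μ : ℝ, RiemannMean T f μ := by
  refine ⟨(volume.real (triSet T))⁻¹ * ∫ y in triSet T, f y, fun x hx => ?_⟩
  have hvol : volume.real (triSet T) ≠ 0 :=
    (ENNReal.toReal_pos (volume_triangle_pos h).ne'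
      (isCompact_triSet _).measure_lt_top.ne).ne'
  have hδ : Tendsto (fun k : ℕ => (2⁻¹ : ℝ) ^ k * Metric.diam (triSet T)) atTop (𝓝 0) := by
    simpa using (tendsto_pow_atTop_nhds_zero_of_lt_one (by norm_num : (0 : ℝ) ≤ 2⁻¹)
      (by norm_num)).mul_const (Metric.diam (triSet T))
  have hsum := tendsto_sum_measureReal_mul_of_ae_continuousWithinAt (s := fun k => range (4 ^ k))
    (C := fun k => disjointed fun i => triSet (subdivAt T k i))
    (isCompact_triSet _).measure_lt_top.ne hb hcont
    (fun k => MeasurableSet.disjointed fun i => measurableSet_triSet _)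
    (fun k => (disjoint_disjointed _).set_pairwise _)
    (fun k => by rw [biUnion_range_disjointed, biUnion_triSet_subdivAt])
    (fun k i hi => triSet_subdivAt_subset T k i (hx k i (mem_range.1 hi))) hδ
    (fun k i hi y hy => dist_le_of_mem_triSet_subdivAt (hx k i (mem_range.1 hi))
      (disjointed_subset (fun i => triSet (subdivAt T k i)) i hy))
  refine (hsum.const_mul _).congr fun k => ?_
  rw [sum_congr rfl fun i hi => by rw [measureReal_disjointed_triSet_subdivAt T (mem_range.1 hi)],
    ← mul_sum]
  field_simp
end
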